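/- arXiv:2409.08814 — 14 statements merged into one kernel-verified Lean document; each statement's English description precedes it below -/
import Mathlib

section
/- Let F be a field, let A = [[α₁,α₂,α₃,α₄],[β₁,β₂,β₃,β₄]] be a 2×4 matrix over F, and define P(A) to be the 2×2 matrix whose first row is (α₁+β₃, α₂+β₄) and whose second row is (α₁+β₂, α₃+β₄). Then for every invertible 2×2 matrix g over F one has P(g · A · (g⁻¹ ⊗ g⁻¹)) = P(A) · g⁻¹, where ⊗ denotes the Kronecker product of matrices. -/
/-!
The rows of `P(A)` are the linear forms `v ↦ tr (x ↦ x·v)` and `v ↦ tr (x ↦ v·x)`. Changing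
basis by `g` conjugates every multiplication operator and replaces `v` by `g⁻¹ v`, so traces are
unchanged and both forms get composed with `g⁻¹`.
-/

open Matrix Kronecker

/-- The matrix of structure constants (MSC) of a 2-dimensional algebra, as a
`2 × (2 × 2)` matrix: the column indexed by `(j,k)` corresponds to the product
`e_j · e_k`, so the columns in order `(0,0), (0,1), (1,0), (1,1)` carry the
entries `α₁ α₂ α₃ α₄` (first row) and `β₁ β₂ β₃ β₄` (second row). -/
def MSC {F : Type*} [Field F] (a1 a2 a3 a4 b1 b2 b3 b4 : F) :
    Matrix (Fin 2) (Fin 2 × Fin 2) F :=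
  Matrix.of fun i j => !![a1, a2, a3, a4; b1, b2, b3, b4] i (finProdFinEquiv j)

/-- `g` is an automorphism matrix of the algebra with MSC `A`:
`g` is invertible and `g • A = A • (g ⊗ g)`. -/
def IsAutoMat {F : Type*} [Field F] (A : Matrix (Fin 2) (Fin 2 × Fin 2) F)
    (g : Matrix (Fin 2) (Fin 2) F) : Prop :=
  IsUnit g ∧ g * A = A * (g ⊗ₖ g)

/-- `D` is a derivation matrix of the algebra with MSC `A`:
`D • A = A • (D ⊗ I + I ⊗ D)`. -/
def IsDerMat {F : Type*} [Field F] (A : Matrix (Fin 2) (Fin 2 × Fin 2) F)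
    (D : Matrix (Fin 2) (Fin 2) F) : Prop :=
  D * A = A * (D ⊗ₖ (1 : Matrix (Fin 2) (Fin 2) F) + (1 : Matrix (Fin 2) (Fin 2) F) ⊗ₖ D)

/-- `P(A)` is the 2×2 matrix whose rows are
`tr̄₁(A) = (α₁+β₃, α₂+β₄)` and `tr̄₂(A) = (α₁+β₂, α₃+β₄)`. -/
def Pmat {F : Type*} [Field F] (A : Matrix (Fin 2) (Fin 2 × Fin 2) F) :
    Matrix (Fin 2) (Fin 2) F :=
  !![A 0 (0, 0) + A 1 (1, 0), A 0 (0, 1) + A 1 (1, 1);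
     A 0 (0, 0) + A 1 (0, 1), A 0 (1, 0) + A 1 (1, 1)]

namespace Matrix

variable {n R : Type*} [Fintype n] [CommSemiring R]

/-- `rightTrace A k` is the trace of right multiplication by `e_k`. -/
def rightTrace (A : Matrix n (n × n) R) : n → R := fun k => ∑ j, A j (j, k)

def leftTrace (A : Matrix n (n × n) R) : n → R := fun k => ∑ j, A j (k, j)

variable [DecidableEq n]

theorem rightTrace_mul_kronecker (A : Matrix n (n × n) R) {g h : Matrix n n R}
    (hhg : h * g = 1) :
    rightTrace (g * A * (h ⊗ₖ h)) = rightTrace A ᵥ* h := by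
  have hA : h * (g * A) = A := by rw [← Matrix.mul_assoc, hhg, Matrix.one_mul]
  ext k
  calc ∑ j, (g * A * (h ⊗ₖ h)) j (j, k)
      = ∑ p : n × n, (∑ j, h p.1 j * (g * A) j p) * h p.2 k := by
        simp only [mul_apply (M := g * A), kroneckerMap_apply, Finset.sum_mul]
        rw [Finset.sum_comm]
        exact Finset.sum_congr rfl fun _ _ => Finset.sum_congr rfl fun _ _ => by ring
    _ = ∑ p : n × n, A p.1 p * h p.2 k := by simp only [← mul_apply, hA]
    _ = (rightTrace A ᵥ* h) k := by
        simp only [Fintype.sum_prod_type, vecMul, dotProduct, rightTrace, Finset.sum_mul]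
        exact Finset.sum_comm

theorem leftTrace_mul_kronecker (A : Matrix n (n × n) R) {g h : Matrix n n R}
    (hhg : h * g = 1) :
    leftTrace (g * A * (h ⊗ₖ h)) = leftTrace A ᵥ* h := by
  have hA : h * (g * A) = A := by rw [← Matrix.mul_assoc, hhg, Matrix.one_mul]
  ext k
  calc ∑ j, (g * A * (h ⊗ₖ h)) j (k, j)
      = ∑ p : n × n, (∑ j, h p.2 j * (g * A) j p) * h p.1 k := by
        simp only [mul_apply (M := g * A), kroneckerMap_apply, Finset.sum_mul]
        rw [Finset.sum_comm]
        exact Finset.sum_congr rfl fun _ _ => Finset.sum_congr rfl fun _ _ => by ring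
    _ = ∑ p : n × n, A p.2 p * h p.1 k := by simp only [← mul_apply, hA]
    _ = (leftTrace A ᵥ* h) k := by
        simp only [Fintype.sum_prod_type, vecMul, dotProduct, leftTrace, Finset.sum_mul]

end Matrix

theorem Pmat_eq_rightTrace_leftTrace {F : Type*} [Field F]
    (A : Matrix (Fin 2) (Fin 2 × Fin 2) F) :
    Pmat A = of ![rightTrace A, leftTrace A] := by
  ext i j
  fin_cases i <;> fin_cases j <;> simp [Pmat, rightTrace, leftTrace, Fin.sum_univ_two]

theorem stmt_0_general {F : Type*} [Field F]
    (A : Matrix (Fin 2) (Fin 2 × Fin 2) F)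
    (g : Matrix (Fin 2) (Fin 2) F) (hg : IsUnit g) :
    Pmat (g * A * (g⁻¹ ⊗ₖ g⁻¹)) = Pmat A * g⁻¹ := by
  have hinv : g⁻¹ * g = 1 := nonsing_inv_mul g ((isUnit_iff_isUnit_det g).mp hg)
  rw [Pmat_eq_rightTrace_leftTrace, Pmat_eq_rightTrace_leftTrace,
    rightTrace_mul_kronecker A hinv, leftTrace_mul_kronecker A hinv]
  simp

theorem stmt_0 {F : Type*} [Field F] (a1 a2 a3 a4 b1 b2 b3 b4 : F)
    (A : Matrix (Fin 2) (Fin 2 × Fin 2) F)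
    (hA : A = MSC a1 a2 a3 a4 b1 b2 b3 b4)
    (g : Matrix (Fin 2) (Fin 2) F) (hg : IsUnit g) :
    Pmat (g * A * (g⁻¹ ⊗ₖ g⁻¹)) = Pmat A * g⁻¹ :=
  stmt_0_general A g hg
end

section
/- Let F be a field, let A = [[α₁,α₂,α₃,α₄],[β₁,β₂,β₃,β₄]] be a 2×4 matrix over F, and let D be a 2×2 matrix over F satisfying D·A = A·(D⊗I₂ + I₂⊗D), where ⊗ is the Kronecker product and I₂ the 2×2 identity matrix. Then P(A)·D = 0, that is, (α₁+β₃, α₂+β₄)·D = 0 and (α₁+β₂, α₃+β₄)·D = 0. -/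
/-!
Read `D` as a derivation `d` of the algebra with structure constants `A`, and write `L x`, `R x`
for the left and right multiplication operators. The Leibniz rule says `L (d x) = [d, L x]` and
`R (d x) = [d, R x]`, so the linear forms `x ↦ tr (L x)` and `x ↦ tr (R x)` vanish on the image
of `d`. The rows of `P(A)` are these two forms in coordinates and the columns of `D` are the
vectors `d (e c)`, so `P(A) * D = 0`.
-/

open Matrix Kronecker

namespace Matrix

variable {n R : Type*} [Fintype n] [CommRing R]

def lmulMatrix (A : Matrix n (n × n) R) (j : n) : Matrix n n R :=
  of fun i k => A i (j, k)

def rmulMatrix (A : Matrix n (n × n) R) (k : n) : Matrix n n R :=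
  of fun i j => A i (j, k)

variable {A : Matrix n (n × n) R} {D : Matrix n n R}

theorem leibniz_apply [DecidableEq n] (hD : D * A = A * (D ⊗ₖ 1 + 1 ⊗ₖ D)) (i j k : n) :
    ∑ l, D i l * A l (j, k) = ∑ m, A i (m, k) * D m j + ∑ m, A i (j, m) * D m k := by
  have h := congrFun (congrFun hD i) (j, k)
  simp only [mul_apply, add_apply, kroneckerMap_apply, one_apply, Fintype.sum_prod_type,
    mul_add, Finset.sum_add_distrib, mul_ite, mul_one, mul_zero, Finset.sum_ite_eq',
    Finset.mem_univ, if_true] at h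
  rw [h, Finset.sum_comm (f := fun m l => A i (m, l) * _)]
  simp

theorem sum_smul_lmulMatrix [DecidableEq n] (hD : D * A = A * (D ⊗ₖ 1 + 1 ⊗ₖ D)) (j : n) :
    ∑ m, D m j • lmulMatrix A m = D * lmulMatrix A j - lmulMatrix A j * D := by
  ext i k
  simp only [sum_apply, smul_apply, smul_eq_mul, sub_apply, mul_apply, lmulMatrix, of_apply,
    leibniz_apply hD]
  simp only [mul_comm (D _ j), add_sub_cancel_right]

theorem sum_smul_rmulMatrix [DecidableEq n] (hD : D * A = A * (D ⊗ₖ 1 + 1 ⊗ₖ D)) (k : n) :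
    ∑ m, D m k • rmulMatrix A m = D * rmulMatrix A k - rmulMatrix A k * D := by
  ext i j
  simp only [sum_apply, smul_apply, smul_eq_mul, sub_apply, mul_apply, rmulMatrix, of_apply,
    leibniz_apply hD]
  simp only [mul_comm (D _ k), add_sub_cancel_left]

theorem trace_vecMul_eq_zero_of_sum_smul_eq_commutator {M : n → Matrix n n R}
    (hM : ∀ j, ∑ m, D m j • M m = D * M j - M j * D) :
    (fun m => (M m).trace) ᵥ* D = 0 := by
  ext j
  have h := congrArg trace (hM j)
  rw [trace_sum, trace_sub, trace_mul_comm, sub_self] at h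
  simpa only [vecMul, dotProduct, trace_smul, smul_eq_mul, mul_comm, Pi.zero_apply] using h

theorem trace_lmulMatrix_vecMul_eq_zero [DecidableEq n] (hD : D * A = A * (D ⊗ₖ 1 + 1 ⊗ₖ D)) :
    (fun m => (lmulMatrix A m).trace) ᵥ* D = 0 :=
  trace_vecMul_eq_zero_of_sum_smul_eq_commutator (sum_smul_lmulMatrix hD)

theorem trace_rmulMatrix_vecMul_eq_zero [DecidableEq n] (hD : D * A = A * (D ⊗ₖ 1 + 1 ⊗ₖ D)) :
    (fun m => (rmulMatrix A m).trace) ᵥ* D = 0 :=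
  trace_vecMul_eq_zero_of_sum_smul_eq_commutator (sum_smul_rmulMatrix hD)

end Matrix

theorem Pmat_eq_traces {F : Type*} [Field F] (A : Matrix (Fin 2) (Fin 2 × Fin 2) F) :
    Pmat A = of ![fun m => (rmulMatrix A m).trace, fun m => (lmulMatrix A m).trace] := by
  ext i j
  fin_cases i <;> fin_cases j <;> simp [Pmat, trace, lmulMatrix, rmulMatrix, Fin.sum_univ_two]

theorem stmt_1_general {F : Type*} [Field F]
    (A : Matrix (Fin 2) (Fin 2 × Fin 2) F)
    (D : Matrix (Fin 2) (Fin 2) F)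
    (hD : IsDerMat A D) :
    Pmat A * D = 0 := by
  funext i
  rw [mul_apply_eq_vecMul, Pmat_eq_traces]
  fin_cases i
  · exact trace_rmulMatrix_vecMul_eq_zero hD
  · exact trace_lmulMatrix_vecMul_eq_zero hD

theorem stmt_1 {F : Type*} [Field F] (a1 a2 a3 a4 b1 b2 b3 b4 : F)
    (A : Matrix (Fin 2) (Fin 2 × Fin 2) F)
    (hA : A = MSC a1 a2 a3 a4 b1 b2 b3 b4)
    (D : Matrix (Fin 2) (Fin 2) F)
    (hD : IsDerMat A D) :
    Pmat A * D = 0 :=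
  stmt_1_general A D hD
end

section
/- Let F be a field with char F ≠ 2 and char F ≠ 3, let α₁,α₂,α₄,β₁ ∈ F, and let A = A₁(α₁,α₂,α₄,β₁) = [[α₁, α₂, 1+α₂, α₄],[β₁, -α₁, 1-α₁, -α₂]]. Then the only invertible 2×2 matrix g over F with gA = A(g⊗g) is the identity matrix, and the only 2×2 matrix D over F with DA = A(D⊗I₂ + I₂⊗D) is the zero matrix. -/
open Matrix Kronecker

/-!
The trace forms `x ↦ tr L_x` and `y ↦ tr R_y` of an algebra are invariant under automorphisms,
since `R_{g y} = g R_y g⁻¹`, and vanish on the image of a derivation, since `R_{D y} = [D, R_y]`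
(likewise for `L`). For `A₁(α₁, α₂, α₄, β₁)` these two forms are the coordinate functionals
`e₂*` and `e₁*`, so `gᵀ` fixes the dual basis and `Dᵀ` annihilates it: `g = 1` and `D = 0`.
-/

section

variable {ι R : Type*} [Fintype ι] [CommRing R]

def mscMul (A : Matrix ι (ι × ι) R) (x y : ι → R) : ι → R :=
  A *ᵥ fun p => x p.1 * y p.2

def rightMulMatrix (A : Matrix ι (ι × ι) R) (y : ι → R) : Matrix ι ι R :=
  of fun i j => ∑ k, A i (j, k) * y k

def leftMulMatrix (A : Matrix ι (ι × ι) R) (x : ι → R) : Matrix ι ι R :=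
  of fun i k => ∑ j, A i (j, k) * x j

def rightTraceForm (A : Matrix ι (ι × ι) R) : ι → R := fun k => ∑ i, A i (i, k)

def leftTraceForm (A : Matrix ι (ι × ι) R) : ι → R := fun j => ∑ i, A i (j, i)

theorem kronecker_mulVec_prod (M N : Matrix ι ι R) (x y : ι → R) :
    (M ⊗ₖ N) *ᵥ (fun p => x p.1 * y p.2) = fun p => (M *ᵥ x) p.1 * (N *ᵥ y) p.2 := by
  ext ⟨a, b⟩
  simp only [mulVec, dotProduct, kroneckerMap_apply, Fintype.sum_prod_type, Finset.sum_mul_sum]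
  exact Finset.sum_congr rfl fun j _ => Finset.sum_congr rfl fun k _ => by ring

theorem rightMulMatrix_mulVec (A : Matrix ι (ι × ι) R) (x y : ι → R) :
    rightMulMatrix A y *ᵥ x = mscMul A x y := by
  ext i
  simp only [rightMulMatrix, mscMul, mulVec, dotProduct, of_apply, Fintype.sum_prod_type,
    Finset.sum_mul]
  exact Finset.sum_congr rfl fun j _ => Finset.sum_congr rfl fun k _ => by ring

theorem leftMulMatrix_mulVec (A : Matrix ι (ι × ι) R) (x y : ι → R) :
    leftMulMatrix A x *ᵥ y = mscMul A x y := by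
  ext i
  simp only [leftMulMatrix, mscMul, mulVec, dotProduct, of_apply, Fintype.sum_prod_type,
    Finset.sum_mul]
  rw [Finset.sum_comm]
  exact Finset.sum_congr rfl fun j _ => Finset.sum_congr rfl fun k _ => by ring

theorem trace_rightMulMatrix (A : Matrix ι (ι × ι) R) (y : ι → R) :
    (rightMulMatrix A y).trace = rightTraceForm A ⬝ᵥ y := by
  simp only [trace, diag, rightMulMatrix, of_apply, rightTraceForm, dotProduct, Finset.sum_mul]
  exact Finset.sum_comm

theorem trace_leftMulMatrix (A : Matrix ι (ι × ι) R) (x : ι → R) :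
    (leftMulMatrix A x).trace = leftTraceForm A ⬝ᵥ x := by
  simp only [trace, diag, leftMulMatrix, of_apply, leftTraceForm, dotProduct, Finset.sum_mul]
  exact Finset.sum_comm

theorem mulVec_mscMul_of_mul_eq {A : Matrix ι (ι × ι) R} {g : Matrix ι ι R}
    (h : g * A = A * (g ⊗ₖ g)) (x y : ι → R) :
    g *ᵥ mscMul A x y = mscMul A (g *ᵥ x) (g *ᵥ y) := by
  rw [mscMul, mulVec_mulVec, h, ← mulVec_mulVec, kronecker_mulVec_prod, mscMul]

theorem rightMulMatrix_conj_of_mul_eq {A : Matrix ι (ι × ι) R} {g : Matrix ι ι R}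
    (h : g * A = A * (g ⊗ₖ g)) (y : ι → R) :
    rightMulMatrix A (g *ᵥ y) * g = g * rightMulMatrix A y :=
  ext_iff_mulVec.2 fun x => by
    rw [← mulVec_mulVec, ← mulVec_mulVec, rightMulMatrix_mulVec, rightMulMatrix_mulVec,
      mulVec_mscMul_of_mul_eq h]

theorem leftMulMatrix_conj_of_mul_eq {A : Matrix ι (ι × ι) R} {g : Matrix ι ι R}
    (h : g * A = A * (g ⊗ₖ g)) (x : ι → R) :
    leftMulMatrix A (g *ᵥ x) * g = g * leftMulMatrix A x :=
  ext_iff_mulVec.2 fun y => by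
    rw [← mulVec_mulVec, ← mulVec_mulVec, leftMulMatrix_mulVec, leftMulMatrix_mulVec,
      mulVec_mscMul_of_mul_eq h]

theorem vecMul_eq_zero_of_trace_commutator {τ : ι → R} {M : (ι → R) → Matrix ι ι R}
    {D : Matrix ι ι R} (htr : ∀ y, (M y).trace = τ ⬝ᵥ y)
    (hcomm : ∀ y, M (D *ᵥ y) = D * M y - M y * D) :
    τ ᵥ* D = 0 :=
  dotProduct_eq_zero _ fun y => by
    rw [← dotProduct_mulVec, ← htr, hcomm, trace_sub, trace_mul_comm, sub_self]

variable [DecidableEq ι]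

theorem mulVec_mscMul_of_derivation {A : Matrix ι (ι × ι) R} {D : Matrix ι ι R}
    (h : D * A = A * (D ⊗ₖ (1 : Matrix ι ι R) + (1 : Matrix ι ι R) ⊗ₖ D))
    (x y : ι → R) :
    D *ᵥ mscMul A x y = mscMul A (D *ᵥ x) y + mscMul A x (D *ᵥ y) := by
  rw [mscMul, mulVec_mulVec, h, ← mulVec_mulVec, add_mulVec, kronecker_mulVec_prod,
    kronecker_mulVec_prod, one_mulVec, one_mulVec, mscMul, mscMul, ← mulVec_add]

theorem rightMulMatrix_mulVec_of_derivation {A : Matrix ι (ι × ι) R} {D : Matrix ι ι R}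
    (h : D * A = A * (D ⊗ₖ (1 : Matrix ι ι R) + (1 : Matrix ι ι R) ⊗ₖ D))
    (y : ι → R) :
    rightMulMatrix A (D *ᵥ y) = D * rightMulMatrix A y - rightMulMatrix A y * D :=
  ext_iff_mulVec.2 fun x => by
    rw [sub_mulVec, ← mulVec_mulVec, ← mulVec_mulVec, rightMulMatrix_mulVec,
      rightMulMatrix_mulVec, rightMulMatrix_mulVec, mulVec_mscMul_of_derivation h,
      add_sub_cancel_left]

theorem leftMulMatrix_mulVec_of_derivation {A : Matrix ι (ι × ι) R} {D : Matrix ι ι R}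
    (h : D * A = A * (D ⊗ₖ (1 : Matrix ι ι R) + (1 : Matrix ι ι R) ⊗ₖ D))
    (x : ι → R) :
    leftMulMatrix A (D *ᵥ x) = D * leftMulMatrix A x - leftMulMatrix A x * D :=
  ext_iff_mulVec.2 fun y => by
    rw [sub_mulVec, ← mulVec_mulVec, ← mulVec_mulVec, leftMulMatrix_mulVec,
      leftMulMatrix_mulVec, leftMulMatrix_mulVec, mulVec_mscMul_of_derivation h,
      add_sub_cancel_right]

theorem vecMul_eq_self_of_trace_conj {τ : ι → R} {M : (ι → R) → Matrix ι ι R}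
    {g : Matrix ι ι R} (htr : ∀ y, (M y).trace = τ ⬝ᵥ y) (hg : IsUnit g)
    (hconj : ∀ y, M (g *ᵥ y) * g = g * M y) :
    τ ᵥ* g = τ :=
  dotProduct_eq _ _ fun y => by
    rw [← dotProduct_mulVec, ← htr, ← htr, ← trace_conj' hg, mul_assoc, hconj,
      nonsing_inv_mul_cancel_left _ _ ((isUnit_iff_isUnit_det g).1 hg)]

theorem rightTraceForm_vecMul_of_mul_eq {A : Matrix ι (ι × ι) R} {g : Matrix ι ι R}
    (hg : IsUnit g) (h : g * A = A * (g ⊗ₖ g)) :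
    rightTraceForm A ᵥ* g = rightTraceForm A :=
  vecMul_eq_self_of_trace_conj (trace_rightMulMatrix A) hg (rightMulMatrix_conj_of_mul_eq h)

theorem leftTraceForm_vecMul_of_mul_eq {A : Matrix ι (ι × ι) R} {g : Matrix ι ι R}
    (hg : IsUnit g) (h : g * A = A * (g ⊗ₖ g)) :
    leftTraceForm A ᵥ* g = leftTraceForm A :=
  vecMul_eq_self_of_trace_conj (trace_leftMulMatrix A) hg (leftMulMatrix_conj_of_mul_eq h)

theorem rightTraceForm_vecMul_of_derivation {A : Matrix ι (ι × ι) R} {D : Matrix ι ι R}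
    (h : D * A = A * (D ⊗ₖ (1 : Matrix ι ι R) + (1 : Matrix ι ι R) ⊗ₖ D)) :
    rightTraceForm A ᵥ* D = 0 :=
  vecMul_eq_zero_of_trace_commutator (trace_rightMulMatrix A)
    (rightMulMatrix_mulVec_of_derivation h)

theorem leftTraceForm_vecMul_of_derivation {A : Matrix ι (ι × ι) R} {D : Matrix ι ι R}
    (h : D * A = A * (D ⊗ₖ (1 : Matrix ι ι R) + (1 : Matrix ι ι R) ⊗ₖ D)) :
    leftTraceForm A ᵥ* D = 0 :=
  vecMul_eq_zero_of_trace_commutator (trace_leftMulMatrix A)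
    (leftMulMatrix_mulVec_of_derivation h)

theorem eq_one_of_single_vecMul {g : Matrix ι ι R}
    (h : ∀ i, Pi.single i 1 ᵥ* g = Pi.single i 1) : g = 1 := by
  ext i j
  simpa [one_apply, Pi.single_apply, eq_comm] using congrFun (h i) j

theorem eq_zero_of_single_vecMul {D : Matrix ι ι R} (h : ∀ i, Pi.single i 1 ᵥ* D = 0) :
    D = 0 := by
  ext i j
  simpa using congrFun (h i) j

end

section

variable {F : Type*} [Field F] (a1 a2 a4 b1 : F)

theorem rightTraceForm_MSC_A1 :
    rightTraceForm (MSC a1 a2 (1 + a2) a4 b1 (-a1) (1 - a1) (-a2)) = Pi.single 0 1 := by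
  ext k; fin_cases k <;> simp [rightTraceForm, MSC, Fin.sum_univ_two, finProdFinEquiv]

theorem leftTraceForm_MSC_A1 :
    leftTraceForm (MSC a1 a2 (1 + a2) a4 b1 (-a1) (1 - a1) (-a2)) = Pi.single 1 1 := by
  ext k; fin_cases k <;> simp [leftTraceForm, MSC, Fin.sum_univ_two, finProdFinEquiv]

end

theorem stmt_2_general {F : Type*} [Field F]
    (a1 a2 a4 b1 : F)
    (A : Matrix (Fin 2) (Fin 2 × Fin 2) F)
    (hA : A = MSC a1 a2 (1 + a2) a4 b1 (-a1) (1 - a1) (-a2)) :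
    (∀ g : Matrix (Fin 2) (Fin 2) F, IsAutoMat A g ↔ g = 1) ∧
    (∀ D : Matrix (Fin 2) (Fin 2) F, IsDerMat A D ↔ D = 0) := by
  subst hA
  refine ⟨fun g => ⟨fun ⟨hg, h⟩ => ?_, ?_⟩, fun D => ⟨fun h => ?_, ?_⟩⟩
  · have hR := rightTraceForm_vecMul_of_mul_eq hg h
    have hL := leftTraceForm_vecMul_of_mul_eq hg h
    rw [rightTraceForm_MSC_A1] at hR
    rw [leftTraceForm_MSC_A1] at hL
    exact eq_one_of_single_vecMul (Fin.forall_fin_two.2 ⟨hR, hL⟩)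
  · rintro rfl
    exact ⟨isUnit_one, by rw [one_kronecker_one, Matrix.one_mul, Matrix.mul_one]⟩
  · have hR := rightTraceForm_vecMul_of_derivation h
    have hL := leftTraceForm_vecMul_of_derivation h
    rw [rightTraceForm_MSC_A1] at hR
    rw [leftTraceForm_MSC_A1] at hL
    exact eq_zero_of_single_vecMul (Fin.forall_fin_two.2 ⟨hR, hL⟩)
  · rintro rfl
    simp [IsDerMat]

theorem stmt_2 {F : Type*} [Field F] (h2 : ringChar F ≠ 2) (h3 : ringChar F ≠ 3)
    (a1 a2 a4 b1 : F)
    (A : Matrix (Fin 2) (Fin 2 × Fin 2) F)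
    (hA : A = MSC a1 a2 (1 + a2) a4 b1 (-a1) (1 - a1) (-a2)) :
    (∀ g : Matrix (Fin 2) (Fin 2) F, IsAutoMat A g ↔ g = 1) ∧
    (∀ D : Matrix (Fin 2) (Fin 2) F, IsDerMat A D ↔ D = 0) :=
  stmt_2_general a1 a2 a4 b1 A hA
end

section
/- Let F be a field with char F ≠ 2 and char F ≠ 3, let α₁,α₄,β₂ ∈ F with α₄ ≠ 0, and let A = A₂(α₁,α₄,β₂) = [[α₁, 0, 0, α₄],[1, β₂, 1-α₁, 0]]. Then the only invertible 2×2 matrix g over F with gA = A(g⊗g) is the identity matrix, and the only 2×2 matrix D with DA = A(D⊗I₂ + I₂⊗D) is the zero matrix. -/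
open Matrix Kronecker

/-!
In `A₂(α₁, α₄, β₂)` the trace of right multiplication `R_x : y ↦ y x` is the first coordinate
`x₀` of `x`. An automorphism `g` conjugates `R_x` into `R_{g x}` and a derivation `D` makes
`R_{D x}` the commutator `[D, R_x]`, so `g` preserves and `D` kills the functional `x ↦ x₀`:
the first row of `g` is `(1, 0)` and that of `D` is `(0, 0)`. Comparing both sides on `e₀ e₀`
and `e₁ e₁` then fixes the second row.
-/

section RightMul

variable {R n : Type*} [Fintype n]

/-- Column `j` is the coordinate vector of `e_j x` in the algebra with structure constants `A`. -/
def rightMulMat [CommSemiring R] (A : Matrix n (n × n) R) (x : n → R) : Matrix n n R :=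
  of fun i j => ∑ k, A i (j, k) * x k

theorem rightMulMat_add [CommSemiring R] (A B : Matrix n (n × n) R) (x : n → R) :
    rightMulMat (A + B) x = rightMulMat A x + rightMulMat B x := by
  ext i j
  simp only [rightMulMat, Matrix.add_apply, of_apply, add_mul, Finset.sum_add_distrib]

theorem mul_rightMulMat [CommSemiring R] (g : Matrix n n R) (A : Matrix n (n × n) R)
    (x : n → R) : g * rightMulMat A x = rightMulMat (g * A) x := by
  ext i j
  simp only [rightMulMat, mul_apply, of_apply, Finset.mul_sum, Finset.sum_mul, mul_assoc]
  exact Finset.sum_comm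

theorem rightMulMat_mulVec_mul [CommSemiring R] (A : Matrix n (n × n) R) (g h : Matrix n n R)
    (x : n → R) : rightMulMat A (h *ᵥ x) * g = rightMulMat (A * (g ⊗ₖ h)) x := by
  ext i j
  simp only [rightMulMat, mul_apply, of_apply, mulVec, dotProduct, Fintype.sum_prod_type,
    kroneckerMap_apply, Finset.mul_sum, Finset.sum_mul]
  conv_rhs => rw [Finset.sum_comm]
  refine Finset.sum_congr rfl fun m _ => ?_
  conv_rhs => rw [Finset.sum_comm]
  exact Finset.sum_congr rfl fun k _ => Finset.sum_congr rfl fun q _ => by ring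

variable [DecidableEq n] [CommRing R] {A : Matrix n (n × n) R}

theorem trace_rightMulMat_mulVec_of_isUnit {g : Matrix n n R} (hu : IsUnit g)
    (hg : g * A = A * (g ⊗ₖ g)) (x : n → R) :
    trace (rightMulMat A (g *ᵥ x)) = trace (rightMulMat A x) := by
  have hconj : rightMulMat A (g *ᵥ x) * g = g * rightMulMat A x := by
    rw [rightMulMat_mulVec_mul, mul_rightMulMat, hg]
  have hdet : IsUnit g.det := (isUnit_iff_isUnit_det g).mp hu
  rw [← trace_conj' hu, mul_assoc, hconj, nonsing_inv_mul_cancel_left _ _ hdet]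

theorem trace_rightMulMat_mulVec_of_leibniz {D : Matrix n n R}
    (hD : D * A = A * (D ⊗ₖ 1 + 1 ⊗ₖ D)) (x : n → R) :
    trace (rightMulMat A (D *ᵥ x)) = 0 := by
  have hleib : D * rightMulMat A x = rightMulMat A x * D + rightMulMat A (D *ᵥ x) := by
    rw [mul_rightMulMat, hD, Matrix.mul_add, rightMulMat_add, ← rightMulMat_mulVec_mul,
      ← rightMulMat_mulVec_mul, one_mulVec, Matrix.mul_one]
  have htr := congrArg trace hleib
  rwa [trace_add, trace_mul_comm, left_eq_add] at htr

end RightMul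

section MSC

variable {F : Type*} [Field F]

theorem MSC_apply (a1 a2 a3 a4 b1 b2 b3 b4 : F) (i j k : Fin 2) :
    MSC a1 a2 a3 a4 b1 b2 b3 b4 i (j, k) = ![!![a1, a2; a3, a4], !![b1, b2; b3, b4]] i j k := by
  fin_cases i <;> fin_cases j <;> fin_cases k <;> rfl

theorem trace_rightMulMat_MSC (a1 a2 a3 a4 b1 b2 b3 b4 : F) (x : Fin 2 → F) :
    trace (rightMulMat (MSC a1 a2 a3 a4 b1 b2 b3 b4) x) = (a1 + b3) * x 0 + (a2 + b4) * x 1 := by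
  simp only [trace, diag_apply, rightMulMat, of_apply, Fin.sum_univ_two, MSC_apply,
    cons_val_zero, cons_val_one]
  ring

theorem isAutoMat_one (A : Matrix (Fin 2) (Fin 2 × Fin 2) F) : IsAutoMat A 1 :=
  ⟨isUnit_one, by rw [one_kronecker_one, Matrix.one_mul, Matrix.mul_one]⟩

theorem isDerMat_zero (A : Matrix (Fin 2) (Fin 2 × Fin 2) F) : IsDerMat A 0 := by
  rw [IsDerMat, zero_kronecker, kronecker_zero, add_zero, Matrix.zero_mul, Matrix.mul_zero]

end MSC

section A₂

variable {F : Type*} [Field F] {a1 a4 b2 : F}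

def A₂ (a1 a4 b2 : F) : Matrix (Fin 2) (Fin 2 × Fin 2) F :=
  MSC a1 0 0 a4 1 b2 (1 - a1) 0

theorem isAutoMat_A₂_iff (ha4 : a4 ≠ 0) {g : Matrix (Fin 2) (Fin 2) F} :
    IsAutoMat (A₂ a1 a4 b2) g ↔ g = 1 := by
  refine ⟨fun hg => ?_, fun h => h ▸ isAutoMat_one _⟩
  have hrow : ∀ x, (g *ᵥ x) 0 = x 0 := fun x => by
    simpa [A₂, trace_rightMulMat_MSC] using trace_rightMulMat_mulVec_of_isUnit hg.1 hg.2 x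
  have h00 : g 0 0 = 1 := by simpa using hrow (Pi.single 0 1)
  have h01 : g 0 1 = 0 := by simpa using hrow (Pi.single 1 1)
  have e00 := congr_fun₂ hg.2 0 (0, 0)
  have e10 := congr_fun₂ hg.2 1 (0, 0)
  simp only [A₂, mul_apply, Fintype.sum_prod_type, Fin.sum_univ_two, kroneckerMap_apply,
    MSC_apply, of_apply, cons_val_zero, cons_val_one, h00, h01] at e00 e10
  have h10 : g 1 0 = 0 := by
    have hsq : a4 * g 1 0 ^ 2 = 0 := by linear_combination -e00
    exact pow_eq_zero_iff two_ne_zero |>.mp ((mul_eq_zero.mp hsq).resolve_left ha4)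
  have h11 : g 1 1 = 1 := by linear_combination e10 + (b2 + 1 - 2 * a1) * h10
  ext i j
  fin_cases i <;> fin_cases j <;> simp [h00, h01, h10, h11]

theorem isDerMat_A₂_iff (ha4 : a4 ≠ 0) {D : Matrix (Fin 2) (Fin 2) F} :
    IsDerMat (A₂ a1 a4 b2) D ↔ D = 0 := by
  refine ⟨fun hD => ?_, fun h => h ▸ isDerMat_zero _⟩
  have hrow : ∀ x, (D *ᵥ x) 0 = 0 := fun x => by
    simpa [A₂, trace_rightMulMat_MSC] using trace_rightMulMat_mulVec_of_leibniz hD x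
  have h00 : D 0 0 = 0 := by simpa using hrow (Pi.single 0 1)
  have h01 : D 0 1 = 0 := by simpa using hrow (Pi.single 1 1)
  have e11 := congr_fun₂ hD 1 (1, 1)
  have e00 := congr_fun₂ hD 1 (0, 0)
  simp only [A₂, mul_apply, Fintype.sum_prod_type, Fin.sum_univ_two, Matrix.add_apply,
    kroneckerMap_apply, MSC_apply, of_apply, cons_val_zero, cons_val_one, one_apply_eq,
    one_apply_ne, ne_eq, zero_ne_one, one_ne_zero, not_false_eq_true, h00, h01] at e11 e00
  have h10 : D 1 0 = 0 :=
    (mul_eq_zero.mp (by linear_combination e11 : a4 * D 1 0 = 0)).resolve_left ha4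
  have h11 : D 1 1 = 0 := by linear_combination e00 + (b2 + 1 - 2 * a1) * h10
  ext i j
  fin_cases i <;> fin_cases j <;> simp [h00, h01, h10, h11]

end A₂

theorem stmt_3_general {F : Type*} [Field F]
    (a1 a4 b2 : F) (ha4 : a4 ≠ 0)
    (A : Matrix (Fin 2) (Fin 2 × Fin 2) F)
    (hA : A = MSC a1 0 0 a4 1 b2 (1 - a1) 0) :
    (∀ g : Matrix (Fin 2) (Fin 2) F, IsAutoMat A g ↔ g = 1) ∧
    (∀ D : Matrix (Fin 2) (Fin 2) F, IsDerMat A D ↔ D = 0) := by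
  subst hA
  exact ⟨fun _ => isAutoMat_A₂_iff ha4, fun _ => isDerMat_A₂_iff ha4⟩

theorem stmt_3 {F : Type*} [Field F] (h2 : ringChar F ≠ 2) (h3 : ringChar F ≠ 3)
    (a1 a4 b2 : F) (ha4 : a4 ≠ 0)
    (A : Matrix (Fin 2) (Fin 2 × Fin 2) F)
    (hA : A = MSC a1 0 0 a4 1 b2 (1 - a1) 0) :
    (∀ g : Matrix (Fin 2) (Fin 2) F, IsAutoMat A g ↔ g = 1) ∧
    (∀ D : Matrix (Fin 2) (Fin 2) F, IsDerMat A D ↔ D = 0) :=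
  stmt_3_general a1 a4 b2 ha4 A hA
end

section
/- Let F be a field with char F ≠ 2 and char F ≠ 3, let β₁,β₂ ∈ F, and let A = A₄(β₁,β₂) = [[0, 1, 1, 0],[β₁, β₂, 1, -1]]. Then the only invertible 2×2 matrix g over F with gA = A(g⊗g) is the identity matrix, and the only 2×2 matrix D with DA = A(D⊗I₂ + I₂⊗D) is the zero matrix. -/
open Matrix Kronecker

/-
Writing a matrix as `[[a, b], [c, d]]`, both conditions become polynomial systems in
`a, b, c, d`, read off from a few entries. For derivations the system is triangular and solves
to `D = 0` once `2` and `3` are invertible. For an automorphism with `b = 0` it forces `g = 1`.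
If `b ≠ 0` it forces `β₂ = 1` and `d = -1/2`; eliminating `β₁` then gives `b(2a + b) = 0`, and
`det g = -(2a + b)` vanishes, so `g` is not invertible.
-/

section

variable {F : Type*} [Field F]

theorem three_ne_zero_of_ringChar_ne_three (h3 : ringChar F ≠ 3) : (3 : F) ≠ 0 := fun h =>
  h3 (CharP.ringChar_of_prime_eq_zero Nat.prime_three (by exact_mod_cast h))

/-- The algebra `A₄(β₁, β₂)`: `e₁e₁ = β₁e₂`, `e₁e₂ = e₁ + β₂e₂`, `e₂e₁ = e₁ + e₂`, `e₂e₂ = -e₂`. -/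
def mscA4 (b1 b2 : F) : Matrix (Fin 2) (Fin 2 × Fin 2) F := MSC 0 1 1 0 b1 b2 1 (-1)

variable {a b c d b1 b2 : F}

theorem mscA4_aut_equations
    (h : !![a, b; c, d] * mscA4 b1 b2 = mscA4 b1 b2 * (!![a, b; c, d] ⊗ₖ !![a, b; c, d])) :
    b * b1 = 2 * a * c ∧ a + b * b2 = a * d + b * c ∧ a + b = a * d + b * c ∧
      -b = 2 * b * d ∧ c + d = b1 * a * b + b2 * b * c + a * d - c * d ∧
      -d = b1 * b ^ 2 + b2 * b * d + b * d - d ^ 2 := by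
  have e00 := congrFun₂ h 0 (0, 0)
  have e01 := congrFun₂ h 0 (0, 1)
  have e10 := congrFun₂ h 0 (1, 0)
  have e11 := congrFun₂ h 0 (1, 1)
  have f10 := congrFun₂ h 1 (1, 0)
  have f11 := congrFun₂ h 1 (1, 1)
  simp only [mscA4, MSC, mul_apply, Fin.sum_univ_two, Fintype.sum_prod_type, kroneckerMap_apply,
    of_apply, finProdFinEquiv, Equiv.coe_fn_mk] at e00 e01 e10 e11 f10 f11
  norm_num at e00 e01 e10 e11 f10 f11
  exact ⟨by linear_combination e00, by linear_combination e01, by linear_combination e10,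
    by linear_combination e11, by linear_combination f10, by linear_combination f11⟩

theorem mscA4_aut_entry_zero_one_eq_zero (hdet : a * d - b * c ≠ 0)
    (h : !![a, b; c, d] * mscA4 b1 b2 = mscA4 b1 b2 * (!![a, b; c, d] ⊗ₖ !![a, b; c, d])) :
    b = 0 := by
  obtain ⟨-, e01, e10, e11, f10, f11⟩ := mscA4_aut_equations h
  by_contra hb
  have hb2 : b2 = 1 := mul_left_cancel₀ hb (by linear_combination e01 - e10)
  have hd : 2 * d = -1 := mul_left_cancel₀ hb (by linear_combination -e11)
  subst hb2
  have hsum : 2 * a + b = 0 := mul_left_cancel₀ hb (by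
    linear_combination -(b * f10) + a * f11 + (b + a * b + a - a * d) * hd - (1 + d - b) * e10)
  exact hdet (by linear_combination a * hd - hsum + e10)

theorem mscA4_aut_eq_one (h2 : (2 : F) ≠ 0) (hdet : a * d - b * c ≠ 0)
    (h : !![a, b; c, d] * mscA4 b1 b2 = mscA4 b1 b2 * (!![a, b; c, d] ⊗ₖ !![a, b; c, d])) :
    a = 1 ∧ b = 0 ∧ c = 0 ∧ d = 1 := by
  obtain rfl := mscA4_aut_entry_zero_one_eq_zero hdet h
  obtain ⟨e00, -, e10, -, f10, -⟩ := mscA4_aut_equations h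
  have ha : a ≠ 0 := by rintro rfl; simp at hdet
  have hd : d = 1 := mul_left_cancel₀ ha (by linear_combination -e10)
  have hc : c = 0 := mul_left_cancel₀ (mul_ne_zero h2 ha) (by linear_combination -e00)
  subst hd hc
  exact ⟨by linear_combination -f10, rfl, rfl, rfl⟩

theorem isAutoMat_mscA4_iff (h2 : ringChar F ≠ 2) (g : Matrix (Fin 2) (Fin 2) F) :
    IsAutoMat (mscA4 b1 b2) g ↔ g = 1 := by
  refine ⟨fun ⟨hu, h⟩ => ?_, fun hg => hg ▸ ⟨isUnit_one, by simp⟩⟩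
  rw [eta_fin_two g] at hu h ⊢
  have hdet : g 0 0 * g 1 1 - g 0 1 * g 1 0 ≠ 0 := by
    rw [← det_fin_two_of]
    exact ((isUnit_iff_isUnit_det _).mp hu).ne_zero
  obtain ⟨ha, hb, hc, hd⟩ := mscA4_aut_eq_one (Ring.two_ne_zero h2) hdet h
  rw [ha, hb, hc, hd, one_fin_two]

theorem mscA4_der_equations (h : IsDerMat (mscA4 b1 b2) !![a, b; c, d]) :
    b * b1 = 2 * c ∧ b = d ∧ 3 * b = 0 ∧ 2 * c = b1 * b + a := by
  have e00 := congrFun₂ h 0 (0, 0)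
  have e10 := congrFun₂ h 0 (1, 0)
  have e11 := congrFun₂ h 0 (1, 1)
  have f10 := congrFun₂ h 1 (1, 0)
  simp only [mscA4, MSC, mul_apply, Matrix.add_apply, Fin.sum_univ_two, Fintype.sum_prod_type,
    of_apply, finProdFinEquiv, Equiv.coe_fn_mk] at e00 e10 e11 f10
  norm_num at e00 e10 e11 f10
  exact ⟨by linear_combination e00, by linear_combination e10, by linear_combination -e11,
    by linear_combination f10⟩

theorem isDerMat_mscA4_iff (h2 : ringChar F ≠ 2) (h3 : ringChar F ≠ 3)
    (D : Matrix (Fin 2) (Fin 2) F) : IsDerMat (mscA4 b1 b2) D ↔ D = 0 := by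
  refine ⟨fun h => ?_, fun hD => by simp [hD, IsDerMat]⟩
  rw [eta_fin_two D] at h ⊢
  obtain ⟨e00, e10, e11, f10⟩ := mscA4_der_equations h
  have hb : D 0 1 = 0 :=
    (mul_eq_zero.mp e11).resolve_left (three_ne_zero_of_ringChar_ne_three h3)
  have hc : D 1 0 = 0 :=
    (mul_eq_zero.mp (by linear_combination -e00 + b1 * hb)).resolve_left (Ring.two_ne_zero h2)
  have ha : D 0 0 = 0 := by linear_combination -f10 + 2 * hc - b1 * hb
  have hd : D 1 1 = 0 := e10 ▸ hb
  rw [ha, hb, hc, hd]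
  exact (eta_fin_two 0).symm

end

theorem stmt_5 {F : Type*} [Field F] (h2 : ringChar F ≠ 2) (h3 : ringChar F ≠ 3)
    (b1 b2 : F)
    (A : Matrix (Fin 2) (Fin 2 × Fin 2) F)
    (hA : A = MSC 0 1 1 0 b1 b2 1 (-1)) :
    (∀ g : Matrix (Fin 2) (Fin 2) F, IsAutoMat A g ↔ g = 1) ∧
    (∀ D : Matrix (Fin 2) (Fin 2) F, IsDerMat A D ↔ D = 0) := by
  subst hA
  exact ⟨isAutoMat_mscA4_iff h2, isDerMat_mscA4_iff h2 h3⟩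
end

section
/- Let F be a field with char F ≠ 2 and char F ≠ 3, let α₁,α₄ ∈ F with α₄ ≠ 0, and let A = A₆(α₁,α₄) = [[α₁, 0, 0, α₄],[1, 1-α₁, -α₁, 0]]. Then the only invertible 2×2 matrix g over F with gA = A(g⊗g) is the identity matrix, and the only 2×2 matrix D with DA = A(D⊗I₂ + I₂⊗D) is the zero matrix. -/
open Matrix Kronecker

/-!
Comparing the entries of both sides gives polynomial equations in the entries of `g` (resp. `D`).
The off-diagonal entries vanish because `α₄ ≠ 0`. For an automorphism the diagonal then satisfies
`g₀₀ g₁₁ = g₁₁` and `g₁₁ = g₀₀²`, so invertibility forces `g = 1`; for a derivation the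
equations give `D₀₀ = 0` directly and `2 α₄ D₁₁ = 0`, whence `D = 0` as `2 ≠ 0`.
-/

section

variable {F : Type*} [Field F]

section A6

variable (a1 a4 : F)

def A6 : Matrix (Fin 2) (Fin 2 × Fin 2) F := MSC a1 0 0 a4 1 (1 - a1) (-a1) 0

theorem A6_apply_zero_zero_zero : A6 a1 a4 0 (0, 0) = a1 := rfl
theorem A6_apply_zero_zero_one : A6 a1 a4 0 (0, 1) = 0 := rfl
theorem A6_apply_zero_one_zero : A6 a1 a4 0 (1, 0) = 0 := rfl
theorem A6_apply_zero_one_one : A6 a1 a4 0 (1, 1) = a4 := rfl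
theorem A6_apply_one_zero_zero : A6 a1 a4 1 (0, 0) = 1 := rfl
theorem A6_apply_one_zero_one : A6 a1 a4 1 (0, 1) = 1 - a1 := rfl
theorem A6_apply_one_one_zero : A6 a1 a4 1 (1, 0) = -a1 := rfl
theorem A6_apply_one_one_one : A6 a1 a4 1 (1, 1) = 0 := rfl

variable {a1 a4}

theorem eq_one_of_isAutoMat_A6 (ha4 : a4 ≠ 0) {g : Matrix (Fin 2) (Fin 2) F}
    (hg : IsAutoMat (A6 a1 a4) g) : g = 1 := by
  obtain ⟨hunit, h⟩ := hg
  rw [← Matrix.ext_iff] at h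
  simp only [Fin.forall_fin_two, Prod.forall, mul_apply, Fintype.sum_prod_type,
    Fin.sum_univ_two, kroneckerMap_apply, A6_apply_zero_zero_zero, A6_apply_zero_zero_one,
    A6_apply_zero_one_zero, A6_apply_zero_one_one, A6_apply_one_zero_zero,
    A6_apply_one_zero_one, A6_apply_one_one_zero, A6_apply_one_one_one] at h
  obtain ⟨⟨⟨-, E2⟩, E3, -⟩, ⟨E5, E6⟩, E7, E8⟩ := h
  have hb : g 0 1 = 0 := by linear_combination E2 - E3
  have hc : g 1 0 = 0 := by
    refine (mul_eq_zero.mp ?_).resolve_right ha4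
    linear_combination E8 + (g 1 1 - 2 * a1 * g 1 1 + g 0 1) * hb
  have had : g 0 0 * g 1 1 = g 1 1 := by linear_combination E7 - E6 + g 1 0 * hb
  have hda : g 1 1 = g 0 0 ^ 2 := by
    linear_combination E5 - (a1 - g 0 0 + 2 * a1 * g 0 0) * hc
  have hdet : g 0 0 * g 1 1 ≠ 0 := by
    have := (isUnit_iff_isUnit_det g).mp hunit
    rwa [isUnit_iff_ne_zero, det_fin_two, hb, hc, mul_zero, sub_zero] at this
  have ha : g 0 0 = 1 :=
    mul_right_cancel₀ (right_ne_zero_of_mul hdet) (had.trans (one_mul _).symm)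
  rw [eta_fin_two g, ha, hb, hc, hda, ha, one_pow, one_fin_two]

theorem eq_zero_of_isDerMat_A6 (h2 : (2 : F) ≠ 0) (ha4 : a4 ≠ 0)
    {D : Matrix (Fin 2) (Fin 2) F} (hD : IsDerMat (A6 a1 a4) D) : D = 0 := by
  rw [IsDerMat, ← Matrix.ext_iff] at hD
  simp only [Fin.forall_fin_two, Prod.forall, mul_apply, Fintype.sum_prod_type,
    Fin.sum_univ_two, kroneckerMap_apply, Matrix.add_apply, one_apply_eq, one_apply_ne one_ne_zero,
    one_apply_ne zero_ne_one, A6_apply_zero_zero_zero, A6_apply_zero_zero_one,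
    A6_apply_zero_one_zero, A6_apply_zero_one_one, A6_apply_one_zero_zero,
    A6_apply_one_zero_one, A6_apply_one_one_zero, A6_apply_one_one_one] at hD
  obtain ⟨⟨⟨G1, -⟩, G3, G4⟩, ⟨-, G6⟩, -, -⟩ := hD
  have ha : D 0 0 = 0 := by linear_combination -G1 - G6
  have hb : D 0 1 = 0 := by linear_combination G1 + a1 * ha
  have hc : D 1 0 = 0 := by
    refine (mul_eq_zero.mp ?_).resolve_left ha4
    linear_combination -G3 - 2 * a1 * hb
  have hd : D 1 1 = 0 := by
    refine (mul_eq_zero.mp ((mul_eq_zero.mp ?_).resolve_left ha4)).resolve_left h2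
    linear_combination -G4 + a4 * ha
  ext i j
  fin_cases i <;> fin_cases j <;> assumption

end A6

end

theorem stmt_7_general {F : Type*} [Field F] (h2 : ringChar F ≠ 2)
    (a1 a4 : F) (ha4 : a4 ≠ 0)
    (A : Matrix (Fin 2) (Fin 2 × Fin 2) F)
    (hA : A = MSC a1 0 0 a4 1 (1 - a1) (-a1) 0) :
    (∀ g : Matrix (Fin 2) (Fin 2) F, IsAutoMat A g ↔ g = 1) ∧
    (∀ D : Matrix (Fin 2) (Fin 2) F, IsDerMat A D ↔ D = 0) := by
  change A = A6 a1 a4 at hA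
  subst hA
  refine ⟨fun g => ⟨eq_one_of_isAutoMat_A6 ha4, ?_⟩, fun D => ⟨?_, ?_⟩⟩
  · rintro rfl
    exact isAutoMat_one _
  · exact eq_zero_of_isDerMat_A6 (Ring.two_ne_zero h2) ha4
  · rintro rfl
    exact isDerMat_zero _

theorem stmt_7 {F : Type*} [Field F] (h2 : ringChar F ≠ 2) (h3 : ringChar F ≠ 3)
    (a1 a4 : F) (ha4 : a4 ≠ 0)
    (A : Matrix (Fin 2) (Fin 2 × Fin 2) F)
    (hA : A = MSC a1 0 0 a4 1 (1 - a1) (-a1) 0) :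
    (∀ g : Matrix (Fin 2) (Fin 2) F, IsAutoMat A g ↔ g = 1) ∧
    (∀ D : Matrix (Fin 2) (Fin 2) F, IsDerMat A D ↔ D = 0) :=
  stmt_7_general h2 a1 a4 ha4 A hA
end

section
/- Let F be a field with char F ≠ 2 and char F ≠ 3, let α₁,α₄ ∈ F, and let A = A₇(α₁,α₄) = [[α₁, 0, 0, α₄],[0, 1-α₁, -α₁, 0]]. Then: (i) if α₄ ≠ 0, the invertible matrices g with gA = A(g⊗g) are exactly [[1,0],[0,±1]], and the only matrix D with DA = A(D⊗I₂ + I₂⊗D) is 0; (ii) if α₄ = 0 and α₁ ≠ 1/3, the automorphism matrices are exactly [[1,0],[0,d]] with d ∈ F, d ≠ 0, and the derivation matrices are exactly [[0,0],[0,d]] with d ∈ F; (iii) if α₄ = 0 and α₁ = 1/3, the automorphism matrices are exactly [[1,0],[c,d]] with c,d ∈ F, d ≠ 0, and the derivation matrices are exactly [[0,0],[c,d]] with c,d ∈ F. -/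
open Matrix Kronecker

/-!
Write `g = !![p, q; r, s]`. Two entries of `g * A = A * (g ⊗ₖ g)` differ exactly by `q`, so
`q = 0`; invertibility then gives `s ≠ 0`, and two further entries give `s * (p - 1) = 0`. What
remains on `g = !![1, 0; c, d]` is `α₄ c = 0`, `(3 α₁ - 1) c = 0`, `α₄ (d² - 1) = 0`. The derivation
equations are linear and reduce the same way to `α₄ c = 0`, `(3 α₁ - 1) c = 0`, `2 α₄ d = 0` on
`D = !![0, 0; c, d]`. The three cases are read off from these constraints.
-/

theorem natCast_ne_zero_of_ringChar_ne {R : Type*} [NonAssocSemiring R] [Nontrivial R] {p : ℕ}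
    (hp : p.Prime) (hR : ringChar R ≠ p) : (p : R) ≠ 0 := by
  rw [Ne, ringChar.spec, Nat.dvd_prime hp]
  exact mt (or_iff_left hR).mp CharP.ringChar_ne_one

section A7

variable {F : Type*} [Field F]

def A7 (a1 a4 : F) : Matrix (Fin 2) (Fin 2 × Fin 2) F :=
  MSC a1 0 0 a4 0 (1 - a1) (-a1) 0

theorem mul_A7_eq_A7_mul_kronecker_iff (a1 a4 p q r s : F) :
    !![p, q; r, s] * A7 a1 a4 = A7 a1 a4 * (!![p, q; r, s] ⊗ₖ !![p, q; r, s]) ↔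
      p * a1 = a1 * p ^ 2 + a4 * r ^ 2 ∧ q * (1 - a1) = a1 * p * q + a4 * r * s ∧
      -(q * a1) = a1 * p * q + a4 * r * s ∧ p * a4 = a1 * q ^ 2 + a4 * s ^ 2 ∧
      r * a1 = (1 - 2 * a1) * p * r ∧ s * (1 - a1) = (1 - a1) * p * s - a1 * q * r ∧
      -(s * a1) = (1 - a1) * q * r - a1 * p * s ∧ r * a4 = (1 - 2 * a1) * q * s := by
  rw [← Matrix.ext_iff]
  simp only [Prod.forall, Fin.forall_fin_two]
  simp only [A7, MSC, Nat.reduceMul, finProdFinEquiv, Fin.divNat, Fin.modNat, Equiv.coe_fn_mk,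
    of_apply, cons_val', cons_val_fin_one, Fin.isValue, Matrix.mul_apply, cons_val_zero,
    Fin.coe_ofNat_eq_mod, Nat.zero_mod, mul_zero, add_zero, Fin.zero_eta, Fin.sum_univ_two,
    cons_val_one, kroneckerMap_apply, Fintype.sum_prod_type, zero_add, Nat.mod_succ, Fin.mk_one,
    zero_mul, mul_one, Fin.reduceFinMk, cons_val, Nat.reduceAdd, mul_neg, neg_mul]
  ring_nf
  simp only [and_assoc]

theorem mul_A7_eq_A7_mul_kroneckerSum_iff (a1 a4 p q r s : F) :
    !![p, q; r, s] * A7 a1 a4 = A7 a1 a4 * (!![p, q; r, s] ⊗ₖ 1 + 1 ⊗ₖ !![p, q; r, s]) ↔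
      p * a1 = 2 * a1 * p ∧ q * (1 - a1) = a1 * q + a4 * r ∧ -(q * a1) = a1 * q + a4 * r ∧
      p * a4 = 2 * a4 * s ∧ r * a1 = (1 - 2 * a1) * r ∧ s * (1 - a1) = (1 - a1) * (p + s) ∧
      s * a1 = a1 * (s + p) ∧ r * a4 = (1 - 2 * a1) * q := by
  rw [← Matrix.ext_iff]
  simp only [Prod.forall, Fin.forall_fin_two]
  simp only [A7, MSC, Nat.reduceMul, finProdFinEquiv, Fin.divNat, Fin.modNat, Equiv.coe_fn_mk,
    of_apply, cons_val', cons_val_fin_one, Fin.isValue, Matrix.mul_apply, cons_val_zero,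
    Fin.coe_ofNat_eq_mod, Nat.zero_mod, mul_zero, add_zero, Fin.zero_eta, Fin.sum_univ_two,
    cons_val_one, Matrix.add_apply, kroneckerMap_apply, Matrix.one_apply, mul_ite, mul_one, ite_mul,
    one_mul, zero_mul, Fintype.sum_prod_type, zero_add, ↓reduceIte, Nat.mod_succ, one_ne_zero,
    Fin.mk_one, Fin.reduceFinMk, cons_val, zero_ne_one, Nat.reduceAdd, mul_neg, neg_mul, neg_inj]
  ring_nf
  simp only [and_assoc]

theorem isAutoMat_A7_iff (a1 a4 : F) (g : Matrix (Fin 2) (Fin 2) F) :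
    IsAutoMat (A7 a1 a4) g ↔ ∃ c d : F, d ≠ 0 ∧ a4 * c = 0 ∧ (3 * a1 - 1) * c = 0 ∧
      a4 * (d ^ 2 - 1) = 0 ∧ g = !![1, 0; c, d] := by
  obtain ⟨p, q, r, s, rfl⟩ : ∃ p q r s, g = !![p, q; r, s] := ⟨_, _, _, _, g.eta_fin_two⟩
  rw [IsAutoMat, Matrix.isUnit_iff_isUnit_det, Matrix.det_fin_two_of, isUnit_iff_ne_zero,
    mul_A7_eq_A7_mul_kronecker_iff]
  constructor
  · rintro ⟨hdet, -, e2, e3, e4, e5, e6, e7, -⟩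
    obtain rfl : q = 0 := by linear_combination e2 - e3
    have hs : s ≠ 0 := by rintro rfl; simp at hdet
    obtain rfl : p = 1 := by
      have : s * (p - 1) = 0 := by linear_combination e7 - e6
      exact sub_eq_zero.mp ((mul_eq_zero.mp this).resolve_left hs)
    refine ⟨r, s, hs, ?_, by linear_combination e5, by linear_combination -e4, rfl⟩
    exact mul_right_cancel₀ hs (by linear_combination -e2)
  · rintro ⟨c, d, hd, hc4, hc3, hd4, h⟩
    simp only [EmbeddingLike.apply_eq_iff_eq, vecCons_inj, and_true] at h
    obtain ⟨⟨rfl, rfl⟩, rfl, rfl⟩ := h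
    exact ⟨by simpa using hd, by linear_combination -r * hc4, by linear_combination -s * hc4,
      by linear_combination -s * hc4, by linear_combination -hd4, by linear_combination hc3,
      by ring, by ring, by linear_combination hc4⟩

theorem isDerMat_A7_iff (a1 a4 : F) (D : Matrix (Fin 2) (Fin 2) F) :
    IsDerMat (A7 a1 a4) D ↔ ∃ c d : F, a4 * c = 0 ∧ (3 * a1 - 1) * c = 0 ∧ 2 * a4 * d = 0 ∧
      D = !![0, 0; c, d] := by
  obtain ⟨p, q, r, s, rfl⟩ : ∃ p q r s, D = !![p, q; r, s] := ⟨_, _, _, _, D.eta_fin_two⟩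
  rw [IsDerMat, mul_A7_eq_A7_mul_kroneckerSum_iff]
  constructor
  · rintro ⟨-, e2, e3, e4, e5, e6, e7, -⟩
    obtain rfl : q = 0 := by linear_combination e2 - e3
    obtain rfl : p = 0 := by linear_combination -e6 - e7
    exact ⟨r, s, by linear_combination -e3, by linear_combination e5, by linear_combination -e4,
      rfl⟩
  · rintro ⟨c, d, hc4, hc3, hd4, h⟩
    simp only [EmbeddingLike.apply_eq_iff_eq, vecCons_inj, and_true] at h
    obtain ⟨⟨rfl, rfl⟩, rfl, rfl⟩ := h
    exact ⟨by ring, by linear_combination -hc4, by linear_combination -hc4,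
      by linear_combination -hd4, by linear_combination hc3, by ring, by ring,
      by linear_combination hc4⟩

theorem isAutoMat_A7_iff_of_ne_zero (a1 : F) {a4 : F} (ha4 : a4 ≠ 0)
    (g : Matrix (Fin 2) (Fin 2) F) :
    IsAutoMat (A7 a1 a4) g ↔ g = !![1, 0; 0, 1] ∨ g = !![1, 0; 0, -1] := by
  rw [isAutoMat_A7_iff]
  constructor
  · rintro ⟨c, d, -, hc, -, hd, rfl⟩
    obtain rfl : c = 0 := (mul_eq_zero.mp hc).resolve_left ha4
    have hd2 : d ^ 2 = 1 := sub_eq_zero.mp ((mul_eq_zero.mp hd).resolve_left ha4)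
    rcases sq_eq_one_iff.mp hd2 with rfl | rfl
    exacts [Or.inl rfl, Or.inr rfl]
  · rintro (rfl | rfl)
    exacts [⟨0, 1, one_ne_zero, by simp, by simp, by simp, rfl⟩,
      ⟨0, -1, by simp, by simp, by simp, by simp, rfl⟩]

theorem isDerMat_A7_iff_of_ne_zero (h2 : (2 : F) ≠ 0) (a1 : F) {a4 : F} (ha4 : a4 ≠ 0)
    (D : Matrix (Fin 2) (Fin 2) F) : IsDerMat (A7 a1 a4) D ↔ D = 0 := by
  rw [isDerMat_A7_iff]
  constructor
  · rintro ⟨c, d, hc, -, hd, rfl⟩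
    obtain rfl : c = 0 := (mul_eq_zero.mp hc).resolve_left ha4
    obtain rfl : d = 0 := (mul_eq_zero.mp hd).resolve_left (mul_ne_zero h2 ha4)
    exact (Matrix.eta_fin_two (0 : Matrix (Fin 2) (Fin 2) F)).symm
  · rintro rfl
    refine ⟨0, 0, by simp, by simp, by simp, ?_⟩
    exact Matrix.eta_fin_two (0 : Matrix (Fin 2) (Fin 2) F)

theorem isAutoMat_A7_zero_iff_of_ne {a1 : F} (ha1 : 3 * a1 ≠ 1) (g : Matrix (Fin 2) (Fin 2) F) :
    IsAutoMat (A7 a1 0) g ↔ ∃ d : F, d ≠ 0 ∧ g = !![1, 0; 0, d] := by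
  simp only [isAutoMat_A7_iff, zero_mul, true_and]
  constructor
  · rintro ⟨c, d, hd, hc, rfl⟩
    obtain rfl : c = 0 := (mul_eq_zero.mp hc).resolve_left (sub_ne_zero.mpr ha1)
    exact ⟨d, hd, rfl⟩
  · rintro ⟨d, hd, rfl⟩
    exact ⟨0, d, hd, mul_zero _, rfl⟩

theorem isDerMat_A7_zero_iff_of_ne {a1 : F} (ha1 : 3 * a1 ≠ 1) (D : Matrix (Fin 2) (Fin 2) F) :
    IsDerMat (A7 a1 0) D ↔ ∃ d : F, D = !![0, 0; 0, d] := by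
  simp only [isDerMat_A7_iff, zero_mul, mul_zero, true_and]
  constructor
  · rintro ⟨c, d, hc, rfl⟩
    obtain rfl : c = 0 := (mul_eq_zero.mp hc).resolve_left (sub_ne_zero.mpr ha1)
    exact ⟨d, rfl⟩
  · rintro ⟨d, rfl⟩
    exact ⟨0, d, mul_zero _, rfl⟩

theorem isAutoMat_A7_zero_iff_of_eq {a1 : F} (ha1 : 3 * a1 = 1) (g : Matrix (Fin 2) (Fin 2) F) :
    IsAutoMat (A7 a1 0) g ↔ ∃ c d : F, d ≠ 0 ∧ g = !![1, 0; c, d] := by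
  simp only [isAutoMat_A7_iff, ha1, sub_self, zero_mul, true_and]

theorem isDerMat_A7_zero_iff_of_eq {a1 : F} (ha1 : 3 * a1 = 1) (D : Matrix (Fin 2) (Fin 2) F) :
    IsDerMat (A7 a1 0) D ↔ ∃ c d : F, D = !![0, 0; c, d] := by
  simp only [isDerMat_A7_iff, ha1, sub_self, zero_mul, mul_zero, true_and]

end A7

theorem stmt_8 {F : Type*} [Field F] (h2 : ringChar F ≠ 2) (h3 : ringChar F ≠ 3)
    (a1 a4 : F)
    (A : Matrix (Fin 2) (Fin 2 × Fin 2) F)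
    (hA : A = MSC a1 0 0 a4 0 (1 - a1) (-a1) 0) :
    (a4 ≠ 0 →
      (∀ g : Matrix (Fin 2) (Fin 2) F,
        IsAutoMat A g ↔ g = !![1, 0; 0, 1] ∨ g = !![1, 0; 0, -1]) ∧
      (∀ D : Matrix (Fin 2) (Fin 2) F, IsDerMat A D ↔ D = 0)) ∧
    (a4 = 0 → a1 ≠ 1 / 3 →
      (∀ g : Matrix (Fin 2) (Fin 2) F,
        IsAutoMat A g ↔ ∃ d : F, d ≠ 0 ∧ g = !![1, 0; 0, d]) ∧
      (∀ D : Matrix (Fin 2) (Fin 2) F,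
        IsDerMat A D ↔ ∃ d : F, D = !![0, 0; 0, d])) ∧
    (a4 = 0 → a1 = 1 / 3 →
      (∀ g : Matrix (Fin 2) (Fin 2) F,
        IsAutoMat A g ↔ ∃ c d : F, d ≠ 0 ∧ g = !![1, 0; c, d]) ∧
      (∀ D : Matrix (Fin 2) (Fin 2) F,
        IsDerMat A D ↔ ∃ c d : F, D = !![0, 0; c, d])) := by
  obtain rfl : A = A7 a1 a4 := hA
  refine ⟨fun ha4 => ⟨isAutoMat_A7_iff_of_ne_zero a1 ha4,
    isDerMat_A7_iff_of_ne_zero (Ring.two_ne_zero h2) a1 ha4⟩, ?_, ?_⟩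
  · rintro rfl ha1
    have h31 : 3 * a1 ≠ 1 := mt eq_one_div_of_mul_eq_one_right ha1
    exact ⟨isAutoMat_A7_zero_iff_of_ne h31, isDerMat_A7_zero_iff_of_ne h31⟩
  · rintro rfl rfl
    have h31 : 3 * (1 / 3 : F) = 1 :=
      mul_one_div_cancel (by exact_mod_cast natCast_ne_zero_of_ringChar_ne Nat.prime_three h3)
    exact ⟨isAutoMat_A7_zero_iff_of_eq h31, isDerMat_A7_zero_iff_of_eq h31⟩
end

section
/- Let F be a field with char F ≠ 2 and char F ≠ 3, and let A = A₉ = [[1/3, 0, 0, 0],[1, 2/3, -1/3, 0]]. Then the invertible 2×2 matrices g over F with gA = A(g⊗g) are exactly the matrices [[1,0],[c,1]] with c ∈ F, and the 2×2 matrices D with DA = A(D⊗I₂ + I₂⊗D) are exactly the matrices [[0,0],[c,0]] with c ∈ F. -/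
open Matrix Kronecker

private lemma q00 : finProdFinEquiv ((0:Fin 2),(0:Fin 2)) = (0:Fin 4) := rfl
private lemma q01 : finProdFinEquiv ((0:Fin 2),(1:Fin 2)) = (1:Fin 4) := rfl
private lemma q10 : finProdFinEquiv ((1:Fin 2),(0:Fin 2)) = (2:Fin 4) := rfl
private lemma q11 : finProdFinEquiv ((1:Fin 2),(1:Fin 2)) = (3:Fin 4) := rfl
private lemma qz : finProdFinEquiv (0 : Fin 2 × Fin 2) = (0:Fin 4) := rfl
private lemma qo : finProdFinEquiv (1 : Fin 2 × Fin 2) = (3:Fin 4) := rfl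

set_option maxHeartbeats 2000000 in
theorem stmt_10 {F : Type*} [Field F] (h2 : ringChar F ≠ 2) (h3 : ringChar F ≠ 3)
    (A : Matrix (Fin 2) (Fin 2 × Fin 2) F)
    (hA : A = MSC (1 / 3) 0 0 0 1 (2 / 3) (-(1 / 3)) 0) :
    (∀ g : Matrix (Fin 2) (Fin 2) F,
      IsAutoMat A g ↔ ∃ c : F, g = !![1, 0; c, 1]) ∧
    (∀ D : Matrix (Fin 2) (Fin 2) F,
      IsDerMat A D ↔ ∃ c : F, D = !![0, 0; c, 0]) := by
  subst hA
  have h3' : (3:F) ≠ 0 := fun h =>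
    h3 (CharP.ringChar_of_prime_eq_zero (by norm_num) (by exact_mod_cast h))
  constructor
  · intro g
    constructor
    · rintro ⟨hu, heq⟩
      rw [← Matrix.ext_iff] at heq
      simp only [Matrix.mul_apply, Fintype.sum_prod_type, Fin.sum_univ_two, MSC, Matrix.of_apply,
        Matrix.kroneckerMap_apply] at heq
      have e1 := heq 0 (0,0)
      have e4 := heq 0 (1,1)
      have e5 := heq 1 (0,0)
      norm_num [q00, q01, q10, q11, qz, qo] at e1 e4 e5
      simp only [Matrix.cons_val] at e1 e4 e5
      norm_num at e1 e4 e5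
      have hb : g 0 1 = 0 := e4.resolve_left h3'
      rw [hb] at e1
      have hdet : g 0 0 * g 1 1 - g 0 1 * g 1 0 ≠ 0 := by
        have := (Matrix.isUnit_iff_isUnit_det g).mp hu
        rw [Matrix.det_fin_two] at this
        exact isUnit_iff_ne_zero.mp this
      rw [hb] at hdet
      have ha0 : g 0 0 ≠ 0 := by
        intro h
        apply hdet
        rw [h]; ring
      have ha : g 0 0 = 1 := by
        field_simp at e1
        exact mul_left_cancel₀ ha0 (by linear_combination -e1)
      rw [ha] at e5
      have hd : g 1 1 = 1 := by
        field_simp at e5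
        have h' : g 1 1 * 3 = 1 * 3 := by linear_combination e5
        exact mul_right_cancel₀ h3' h' 
      refine ⟨g 1 0, ?_⟩
      conv_lhs => rw [Matrix.eta_fin_two g]
      rw [ha, hb, hd]
    · rintro ⟨c, rfl⟩
      constructor
      · rw [Matrix.isUnit_iff_isUnit_det, Matrix.det_fin_two]
        norm_num
      · rw [← Matrix.ext_iff]
        intro i j
        fin_cases i <;> fin_cases j <;>
          · simp [Matrix.mul_apply, Fintype.sum_prod_type, Fin.sum_univ_two, MSC,
              Matrix.kroneckerMap_apply, finProdFinEquiv]
            try ring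
  · intro D
    constructor
    · intro heq
      rw [IsDerMat, ← Matrix.ext_iff] at heq
      simp only [Matrix.mul_apply, Fintype.sum_prod_type, Fin.sum_univ_two, MSC, Matrix.of_apply,
        Matrix.kroneckerMap_apply, Matrix.add_apply, Matrix.one_apply] at heq
      have e1 := heq 0 (0,0)
      have e2 := heq 0 (0,1)
      have e5 := heq 1 (0,0)
      norm_num [q00, q01, q10, q11, qz, qo] at e1 e2 e5
      simp only [Matrix.cons_val] at e1 e2 e5
      norm_num at e1 e2 e5
      have hb : D 0 1 = 0 := by
        field_simp at e2
        linear_combination e2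
      have ha : D 0 0 = 0 := by
        rw [hb] at e1
        field_simp at e1
        linear_combination -e1
      have hd : D 1 1 = 0 := by
        rw [ha] at e5
        field_simp at e5
        have h' : D 1 1 * 3 = 0 * 3 := by linear_combination e5
        exact mul_right_cancel₀ h3' h' 
      refine ⟨D 1 0, ?_⟩
      conv_lhs => rw [Matrix.eta_fin_two D]
      rw [ha, hb, hd]
    · rintro ⟨c, rfl⟩
      rw [IsDerMat, ← Matrix.ext_iff]
      intro i j
      fin_cases i <;> fin_cases j <;>
        · simp [Matrix.mul_apply, Fintype.sum_prod_type, Fin.sum_univ_two, MSC,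
            Matrix.kroneckerMap_apply, Matrix.add_apply, Matrix.one_apply, finProdFinEquiv]
          try ring
end

section
/- Let F be a field with char F ≠ 2 and char F ≠ 3, let β₁ ∈ F, assume that the polynomial (β₁t³ - 3t - 1)(β₁t² + β₁t + 1)(β₁²t³ + 6β₁t² + 3β₁t + β₁ - 2) in t has no root in F, and let A = A₁₀(β₁) = [[0, 1, 1, 1],[β₁, 0, 0, -1]]. Then the only 2×2 matrix D over F with DA = A(D⊗I₂ + I₂⊗D) is the zero matrix, and the invertible 2×2 matrices g with gA = A(g⊗g) are exactly: the identity matrix, together with the matrices [[-1-d, -(1+d+d²)/(1+2d)],[1+2d, d]] for those d ∈ F with 1+2d ≠ 0, d²+d+1 ≠ 0 and β₁ = (1+2d)²/(d²+d+1), together with the matrices [[-d, (-d-d²)/(1+2d)],[(2d²-d-1)/d, d]] for those d ∈ F with d ≠ 0, 1+2d ≠ 0 and β₁ = (d-1)(1+2d)²/d³. -/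
open Matrix Kronecker

section Aux
set_option linter.unusedSectionVars false
set_option linter.unusedVariables false
variable {F : Type*} [Field F]

private lemma MSC_app (a1 a2 a3 a4 b1 b2 b3 b4 : F) :
    MSC a1 a2 a3 a4 b1 b2 b3 b4 0 (0,0) = a1 ∧
    MSC a1 a2 a3 a4 b1 b2 b3 b4 0 (0,1) = a2 ∧
    MSC a1 a2 a3 a4 b1 b2 b3 b4 0 (1,0) = a3 ∧
    MSC a1 a2 a3 a4 b1 b2 b3 b4 0 (1,1) = a4 ∧
    MSC a1 a2 a3 a4 b1 b2 b3 b4 1 (0,0) = b1 ∧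
    MSC a1 a2 a3 a4 b1 b2 b3 b4 1 (0,1) = b2 ∧
    MSC a1 a2 a3 a4 b1 b2 b3 b4 1 (1,0) = b3 ∧
    MSC a1 a2 a3 a4 b1 b2 b3 b4 1 (1,1) = b4 :=
  ⟨rfl, rfl, rfl, rfl, rfl, rfl, rfl, rfl⟩


private lemma m2_app (p q r s : F) :
    !![p, q; r, s] 0 0 = p ∧ !![p, q; r, s] 0 1 = q ∧
    !![p, q; r, s] 1 0 = r ∧ !![p, q; r, s] 1 1 = s :=
  ⟨rfl, rfl, rfl, rfl⟩

private lemma mul_MSC (p q r s a1 a2 a3 a4 b1 b2 b3 b4 : F) :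
    !![p, q; r, s] * MSC a1 a2 a3 a4 b1 b2 b3 b4 =
      MSC (p*a1 + q*b1) (p*a2 + q*b2) (p*a3 + q*b3) (p*a4 + q*b4)
        (r*a1 + s*b1) (r*a2 + s*b2) (r*a3 + s*b3) (r*a4 + s*b4) := by
  have M1 := MSC_app a1 a2 a3 a4 b1 b2 b3 b4
  have M2 := MSC_app (p*a1 + q*b1) (p*a2 + q*b2) (p*a3 + q*b3) (p*a4 + q*b4)
        (r*a1 + s*b1) (r*a2 + s*b2) (r*a3 + s*b3) (r*a4 + s*b4)
  refine Matrix.ext_iff.1 ?_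
  simp only [Prod.forall, Fin.forall_fin_two]
  simp only [Matrix.mul_apply, Fin.sum_univ_two,
    M1.1, M1.2.1, M1.2.2.1, M1.2.2.2.1, M1.2.2.2.2.1, M1.2.2.2.2.2.1, M1.2.2.2.2.2.2.1,
    M1.2.2.2.2.2.2.2,
    M2.1, M2.2.1, M2.2.2.1, M2.2.2.2.1, M2.2.2.2.2.1, M2.2.2.2.2.2.1, M2.2.2.2.2.2.2.1,
    M2.2.2.2.2.2.2.2,
    (m2_app p q r s).1, (m2_app p q r s).2.1, (m2_app p q r s).2.2.1, (m2_app p q r s).2.2.2]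
  refine ⟨⟨⟨?_, ?_⟩, ?_, ?_⟩, ⟨?_, ?_⟩, ?_, ?_⟩ <;> trivial

private lemma MSC_mul_kron (p q r s a1 a2 a3 a4 b1 b2 b3 b4 : F) :
    MSC a1 a2 a3 a4 b1 b2 b3 b4 * (!![p, q; r, s] ⊗ₖ !![p, q; r, s]) =
      MSC (a1*p*p + a2*p*r + a3*r*p + a4*r*r) (a1*p*q + a2*p*s + a3*r*q + a4*r*s)
          (a1*q*p + a2*q*r + a3*s*p + a4*s*r) (a1*q*q + a2*q*s + a3*s*q + a4*s*s)
          (b1*p*p + b2*p*r + b3*r*p + b4*r*r) (b1*p*q + b2*p*s + b3*r*q + b4*r*s)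
          (b1*q*p + b2*q*r + b3*s*p + b4*s*r) (b1*q*q + b2*q*s + b3*s*q + b4*s*s) := by
  have M1 := MSC_app a1 a2 a3 a4 b1 b2 b3 b4
  have M2 := MSC_app (a1*p*p + a2*p*r + a3*r*p + a4*r*r) (a1*p*q + a2*p*s + a3*r*q + a4*r*s)
          (a1*q*p + a2*q*r + a3*s*p + a4*s*r) (a1*q*q + a2*q*s + a3*s*q + a4*s*s)
          (b1*p*p + b2*p*r + b3*r*p + b4*r*r) (b1*p*q + b2*p*s + b3*r*q + b4*r*s)
          (b1*q*p + b2*q*r + b3*s*p + b4*s*r) (b1*q*q + b2*q*s + b3*s*q + b4*s*s)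
  refine Matrix.ext_iff.1 ?_
  simp only [Prod.forall, Fin.forall_fin_two]
  simp only [Matrix.mul_apply, Fintype.sum_prod_type, Fin.sum_univ_two,
    Matrix.kroneckerMap_apply,
    M1.1, M1.2.1, M1.2.2.1, M1.2.2.2.1, M1.2.2.2.2.1, M1.2.2.2.2.2.1, M1.2.2.2.2.2.2.1,
    M1.2.2.2.2.2.2.2,
    M2.1, M2.2.1, M2.2.2.1, M2.2.2.2.1, M2.2.2.2.2.1, M2.2.2.2.2.2.1, M2.2.2.2.2.2.2.1,
    M2.2.2.2.2.2.2.2,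
    (m2_app p q r s).1, (m2_app p q r s).2.1, (m2_app p q r s).2.2.1, (m2_app p q r s).2.2.2]
  refine ⟨⟨⟨?_, ?_⟩, ?_, ?_⟩, ⟨?_, ?_⟩, ?_, ?_⟩ <;> ring

private lemma MSC_ext {a1 a2 a3 a4 b1 b2 b3 b4 c1 c2 c3 c4 d1 d2 d3 d4 : F}
    (h1 : a1 = c1) (h2 : a2 = c2) (h3 : a3 = c3) (h4 : a4 = c4)
    (h5 : b1 = d1) (h6 : b2 = d2) (h7 : b3 = d3) (h8 : b4 = d4) :
    MSC a1 a2 a3 a4 b1 b2 b3 b4 = MSC c1 c2 c3 c4 d1 d2 d3 d4 := by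
  rw [h1, h2, h3, h4, h5, h6, h7, h8]

private lemma aux_forward (b1 a b c d : F) (h2' : (2:F) ≠ 0)
    (hb1 : b1 ≠ 0) (hb14 : b1 ≠ 4)
    (hdet : a * d - b * c ≠ 0)
    (hF1 : b * b1 = 2*a*c + c^2)
    (hF2 : d * b1 = a^2*b1 - c^2)
    (hF3 : a = a*d + b*c + c*d)
    (hF4 : c = a*b*b1 - c*d)
    (hF5 : a - b = 2*b*d + d^2)
    (hF6 : c - d = b^2*b1 - d^2) :
    (a = 1 ∧ b = 0 ∧ c = 0 ∧ d = 1) ∨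
    (1 + 2 * d ≠ 0 ∧ d ^ 2 + d + 1 ≠ 0 ∧ b1 = (1 + 2 * d) ^ 2 / (d ^ 2 + d + 1) ∧
      a = -1 - d ∧ b = -((1 + d + d ^ 2) / (1 + 2 * d)) ∧ c = 1 + 2 * d) ∨
    (d ≠ 0 ∧ 1 + 2 * d ≠ 0 ∧ b1 = (d - 1) * (1 + 2 * d) ^ 2 / d ^ 3 ∧
      a = -d ∧ b = (-d - d ^ 2) / (1 + 2 * d) ∧ c = (2 * d ^ 2 - d - 1) / d) := by
  by_cases hc : c = 0
  · subst hc
    have hbz : b = 0 := by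
      have h0 : b * b1 = 0 := by linear_combination hF1
      rcases mul_eq_zero.1 h0 with h | h
      · exact h
      · exact absurd h hb1
    subst hbz
    have hd0 : d ≠ 0 := by
      intro h
      apply hdet
      rw [h]; ring
    have hdd : d * (d - 1) = 0 := by linear_combination hF6
    have hd1 : d = 1 := by
      rcases mul_eq_zero.1 hdd with h | h
      · exact absurd h hd0
      · linear_combination h
    have ha : a = 1 := by linear_combination hF5 + (d + 1) * hd1
    exact Or.inl ⟨ha, rfl, rfl, hd1⟩
  · have h4 : b1 - 4 ≠ 0 := sub_ne_zero.2 hb14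
    have hkey : c * ((b1 - 4) * ((a + d) * (a + d + 1))) = 0 := by
      linear_combination (2 + 4*d - c + 2*a) * hF1 + (2*d - c) * hF2 +
        (-2*b1 - 2*d*b1 - 2*a*b1) * hF3 + (-4*d + 2*c) * hF4 +
        (2*b1 + c*b1 + 2*a*b1) * hF5
    have hsum : (a + d) * (a + d + 1) = 0 := by
      rcases mul_eq_zero.1 hkey with h | h
      · exact absurd h hc
      · rcases mul_eq_zero.1 h with h' | h'
        · exact absurd h' h4
        · exact h'
    have hr4 : c * (1 + d) = c * (2*a^2 + a*c) := by linear_combination hF4 + a * hF1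
    have hr4' : 1 + d = 2*a^2 + a*c := mul_left_cancel₀ hc hr4
    rcases mul_eq_zero.1 hsum with hS | hS
    · -- family 3 : a = -d
      have ha : a = -d := by linear_combination hS
      subst ha
      have hd0 : d ≠ 0 := by
        intro h
        have h1 : (1:F) = 0 := by linear_combination hr4' + (2*d - c - 1) * h
        exact one_ne_zero h1
      have hcd : c * d = 2*d^2 - d - 1 := by linear_combination hr4'
      have h2d : 1 + 2 * d ≠ 0 := by
        intro h
        have h40 : (4:F) * (c * d) = 0 := by linear_combination 4 * hcd + (4*d - 4) * h
        have h4n : (4:F) ≠ 0 := by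
          have e4 : (4:F) = 2 * 2 := by norm_num
          rw [e4]; exact mul_ne_zero h2' h2'
        exact mul_ne_zero h4n (mul_ne_zero hc hd0) h40
      have hc2 : c^2 = b1 * (d^2 - d) := by linear_combination hF2
      have hd1 : d ≠ 1 := by
        intro h
        have hcz : c^2 = 0 := by linear_combination hc2 + b1 * d * h
        exact hc ((pow_eq_zero_iff (by norm_num)).1 hcz)
      have hb1e : (b1 * d^3) * (d - 1) = ((d - 1) * (1 + 2*d)^2) * (d - 1) := by
        linear_combination (c*d + 2*d^2 - d - 1) * hcd - d^2 * hc2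
      have hb1v : b1 * d^3 = (d - 1) * (1 + 2*d)^2 :=
        mul_right_cancel₀ (sub_ne_zero.2 hd1) hb1e
      have hbig : (b * (1 + 2*d)) * ((d - 1) * (1 + 2*d)) = (-d - d^2) * ((d - 1) * (1 + 2*d)) := by
        linear_combination (-b) * hb1v + d^3 * hF1 + (d*(c*d + 2*d^2 - d - 1) - 2*d^3) * hcd
      have hbv : b * (1 + 2*d) = -d - d^2 :=
        mul_right_cancel₀ (mul_ne_zero (sub_ne_zero.2 hd1) h2d) hbig
      refine Or.inr (Or.inr ⟨hd0, h2d, ?_, rfl, ?_, ?_⟩)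
      · rw [eq_div_iff (pow_ne_zero 3 hd0)]; linear_combination hb1v
      · rw [eq_div_iff h2d]; linear_combination hbv
      · rw [eq_div_iff hd0]; linear_combination hcd
    · -- family 2 : a = -1 - d
      have ha : a = -1 - d := by linear_combination hS
      subst ha
      by_cases h1d : 1 + d = 0
      · have hdm : d = -1 := by linear_combination h1d
        subst hdm
        have hb1c : c^2 = b1 := by linear_combination hF2
        have hbb : b * b1 = c^2 := by linear_combination hF1
        have hbv : b = 1 := by
          apply mul_right_cancel₀ hb1
          rw [one_mul]; linear_combination hbb + hb1c
        have hquad2 : (c - 2) * (c + 1) = 0 := by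
          linear_combination (-1 : F) * hF6 - b1 * (b + 1) * hbv + hb1c
        rcases mul_eq_zero.1 hquad2 with h | h
        · exfalso
          apply hb14
          have hc2e : c = 2 := by linear_combination h
          linear_combination (-1 : F) * hb1c + (c + 2) * hc2e
        · have hcm : c = -1 := by linear_combination h
          have hB1 : b1 = 1 := by linear_combination (-1 : F) * hb1c + (c - 1) * hcm
          refine Or.inr (Or.inl ⟨by norm_num, by norm_num, by rw [hB1]; norm_num, by norm_num,
            by rw [hbv]; norm_num, by rw [hcm]; norm_num⟩)
      · have hcd : c = 1 + 2 * d := by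
          apply mul_left_cancel₀ h1d
          linear_combination hr4'
        subst hcd
        have h2d : (1 : F) + 2 * d ≠ 0 := hc
        have hq : (1 + 2*d)^2 = b1 * (d^2 + d + 1) := by linear_combination hF2
        have hquad : d^2 + d + 1 ≠ 0 := by
          intro h
          apply h2d
          have hz : (1 + 2*d)^2 = 0 := by linear_combination hq + b1 * h
          exact (pow_eq_zero_iff (by norm_num)).1 hz
        have hbig : (b * (1 + 2*d)) * (1 + 2*d) = (-(1 + d + d^2)) * (1 + 2*d) := by
          linear_combination b * hq + (d^2 + d + 1) * hF1
        have hbv : b * (1 + 2*d) = -(1 + d + d^2) := mul_right_cancel₀ h2d hbig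
        refine Or.inr (Or.inl ⟨h2d, hquad, ?_, rfl, ?_, rfl⟩)
        · rw [eq_div_iff hquad]; linear_combination -hq
        · rw [← neg_div, eq_div_iff h2d]; linear_combination hbv

end Aux

set_option maxHeartbeats 1000000 in
theorem stmt_11 {F : Type*} [Field F] (h2 : ringChar F ≠ 2) (h3 : ringChar F ≠ 3)
    (b1 : F)
    (hroot : ∀ t : F,
      (b1 * t ^ 3 - 3 * t - 1) * (b1 * t ^ 2 + b1 * t + 1) *
        (b1 ^ 2 * t ^ 3 + 6 * b1 * t ^ 2 + 3 * b1 * t + b1 - 2) ≠ 0)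
    (A : Matrix (Fin 2) (Fin 2 × Fin 2) F)
    (hA : A = MSC 0 1 1 1 b1 0 0 (-1)) :
    (∀ D : Matrix (Fin 2) (Fin 2) F, IsDerMat A D ↔ D = 0) ∧
    (∀ g : Matrix (Fin 2) (Fin 2) F,
      IsAutoMat A g ↔
        g = 1 ∨
        (∃ d : F, 1 + 2 * d ≠ 0 ∧ d ^ 2 + d + 1 ≠ 0 ∧
          b1 = (1 + 2 * d) ^ 2 / (d ^ 2 + d + 1) ∧
          g = !![-1 - d, -((1 + d + d ^ 2) / (1 + 2 * d)); 1 + 2 * d, d]) ∨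
        (∃ d : F, d ≠ 0 ∧ 1 + 2 * d ≠ 0 ∧
          b1 = (d - 1) * (1 + 2 * d) ^ 2 / d ^ 3 ∧
          g = !![-d, (-d - d ^ 2) / (1 + 2 * d); (2 * d ^ 2 - d - 1) / d, d])) := by
  subst hA
  have h2' : (2:F) ≠ 0 := Ring.two_ne_zero h2
  have h3' : (3:F) ≠ 0 := by
    intro h
    have hdvd : ringChar F ∣ 3 := (CharP.cast_eq_zero_iff F (ringChar F) 3).1 (by exact_mod_cast h)
    rcases (Nat.prime_three).eq_one_or_self_of_dvd _ hdvd with h1 | h1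
    · exact CharP.ringChar_ne_one h1
    · exact h3 h1
  have hb1 : b1 ≠ 0 := by
    intro h
    apply hroot (-(3:F)⁻¹)
    rw [h]
    have e : (3:F) * (3:F)⁻¹ = 1 := mul_inv_cancel₀ h3'
    linear_combination (-2 : F) * e
  have hb14 : b1 ≠ 4 := by
    intro h
    apply hroot 1
    rw [h]; norm_num
  have M := MSC_app (0:F) 1 1 1 b1 0 0 (-1)
  constructor
  · intro D
    constructor
    · intro hD
      unfold IsDerMat at hD
      have e1 := congr_fun (congr_fun hD 0) (0,0)
      have e2 := congr_fun (congr_fun hD 1) (0,0)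
      have e3 := congr_fun (congr_fun hD 0) (0,1)
      have e4 := congr_fun (congr_fun hD 0) (1,1)
      simp only [Matrix.mul_apply, Matrix.add_apply, Fintype.sum_prod_type, Fin.sum_univ_two,
        Matrix.kroneckerMap_apply, Matrix.one_apply, M.1, M.2.1, M.2.2.1, M.2.2.2.1,
        M.2.2.2.2.1, M.2.2.2.2.2.1, M.2.2.2.2.2.2.1, M.2.2.2.2.2.2.2] at e1 e2 e3 e4
      norm_num at e1 e2 e3 e4
      -- e1 : D 0 1 * b1 = 2 * D 1 0 (shape unknown, use linear_combination)
      have hq1 : D 0 1 * b1 = 2 * D 1 0 := by linear_combination e1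
      have hq2 : D 1 1 * b1 = 2 * D 0 0 * b1 := by linear_combination e2
      have hq3 : D 1 0 + D 1 1 = 0 := by linear_combination -e3
      have hq4 : D 0 0 - D 0 1 = 2 * D 0 1 + 2 * D 1 1 := by linear_combination e4
      have h3d : (3:F) * D 1 1 * (b1 - 4) = 0 := by
        linear_combination (-1 : F) * hq2 - 2 * b1 * hq4 - 6 * hq1 - 12 * hq3
      have hd : D 1 1 = 0 := by
        rcases mul_eq_zero.1 h3d with h | h
        · rcases mul_eq_zero.1 h with h' | h'
          · exact absurd h' h3'
          · exact h'
        · exact absurd h (sub_ne_zero.2 hb14)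
      have hc : D 1 0 = 0 := by linear_combination hq3 - hd
      have ha : D 0 0 = 0 := by
        have h0 : 2 * D 0 0 * b1 = 0 := by linear_combination -hq2 + b1 * hd
        rcases mul_eq_zero.1 h0 with h | h
        · rcases mul_eq_zero.1 h with h' | h'
          · exact absurd h' h2'
          · exact h'
        · exact absurd h hb1
      have hb : D 0 1 = 0 := by
        have h0 : D 0 1 * b1 = 0 := by linear_combination hq1 + 2 * hc
        rcases mul_eq_zero.1 h0 with h | h
        · exact h
        · exact absurd h hb1
      ext i j
      fin_cases i <;> fin_cases j <;>
        simp only [Matrix.zero_apply] <;> assumption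
    · rintro rfl
      unfold IsDerMat
      simp [Matrix.zero_kronecker, Matrix.kronecker_zero]
  · intro g
    constructor
    · rintro ⟨hunit, hg⟩
      have hdet : g 0 0 * g 1 1 - g 0 1 * g 1 0 ≠ 0 := by
        have hu := (Matrix.isUnit_iff_isUnit_det g).1 hunit
        rw [Matrix.det_fin_two] at hu
        exact hu.ne_zero
      have e1 := congr_fun (congr_fun hg 0) (0,0)
      have e2 := congr_fun (congr_fun hg 1) (0,0)
      have e3 := congr_fun (congr_fun hg 0) (0,1)
      have e4 := congr_fun (congr_fun hg 1) (0,1)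
      have e5 := congr_fun (congr_fun hg 0) (1,1)
      have e6 := congr_fun (congr_fun hg 1) (1,1)
      simp only [Matrix.mul_apply, Fintype.sum_prod_type, Fin.sum_univ_two,
        Matrix.kroneckerMap_apply, M.1, M.2.1, M.2.2.1, M.2.2.2.1,
        M.2.2.2.2.1, M.2.2.2.2.2.1, M.2.2.2.2.2.2.1, M.2.2.2.2.2.2.2] at e1 e2 e3 e4 e5 e6
      have hF1 : g 0 1 * b1 = 2 * g 0 0 * g 1 0 + (g 1 0)^2 := by linear_combination e1
      have hF2 : g 1 1 * b1 = (g 0 0)^2 * b1 - (g 1 0)^2 := by linear_combination e2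
      have hF3 : g 0 0 = g 0 0 * g 1 1 + g 0 1 * g 1 0 + g 1 0 * g 1 1 := by linear_combination e3
      have hF4 : g 1 0 = g 0 0 * g 0 1 * b1 - g 1 0 * g 1 1 := by linear_combination e4
      have hF5 : g 0 0 - g 0 1 = 2 * g 0 1 * g 1 1 + (g 1 1)^2 := by linear_combination e5
      have hF6 : g 1 0 - g 1 1 = (g 0 1)^2 * b1 - (g 1 1)^2 := by linear_combination e6
      rcases aux_forward b1 (g 0 0) (g 0 1) (g 1 0) (g 1 1) h2' hb1 hb14 hdet hF1 hF2 hF3 hF4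
          hF5 hF6 with ⟨ha, hb, hc, hd⟩ | ⟨h2d, hquad, hB, ha, hb, hc⟩ | ⟨hd0, h2d, hB, ha, hb, hc⟩
      · left
        conv_lhs => rw [Matrix.eta_fin_two g]
        rw [ha, hb, hc, hd]
        exact Matrix.one_fin_two.symm
      · refine Or.inr (Or.inl ⟨g 1 1, h2d, hquad, hB, ?_⟩)
        conv_lhs => rw [Matrix.eta_fin_two g]
        rw [ha, hb, hc]
      · refine Or.inr (Or.inr ⟨g 1 1, hd0, h2d, hB, ?_⟩)
        conv_lhs => rw [Matrix.eta_fin_two g]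
        rw [ha, hb, hc]
    · intro h
      rcases h with rfl | ⟨d, h2d, hquad, hB, rfl⟩ | ⟨d, hd0, h2d, hB, rfl⟩
      · exact ⟨isUnit_one, by rw [Matrix.one_kronecker_one, Matrix.one_mul, Matrix.mul_one]⟩
      · constructor
        · refine (Matrix.isUnit_iff_isUnit_det _).2 ?_
          rw [Matrix.det_fin_two_of]
          have hdet1 : (-1 - d) * d - -((1 + d + d ^ 2) / (1 + 2 * d)) * (1 + 2 * d) = 1 := by
            have h2d' : (1:F) + d * 2 ≠ 0 := by intro h; apply h2d; linear_combination h
            field_simp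
            ring
          rw [hdet1]; exact isUnit_one
        · clear hroot M hb1 hb14 h2 h3 h2' h3'
          subst hB
          have h2d' : (1:F) + d * 2 ≠ 0 := by intro h; apply h2d; linear_combination h
          have hquad' : (1:F) + d + d ^ 2 ≠ 0 := by intro h; apply hquad; linear_combination h
          have hquad'' : d * (d + 1) + 1 ≠ 0 := by intro h; apply hquad; linear_combination h
          rw [mul_MSC, MSC_mul_kron]
          apply MSC_ext <;>
            first
              | rfl
              | (field_simp; try ring)
      · constructor
        · refine (Matrix.isUnit_iff_isUnit_det _).2 ?_
          rw [Matrix.det_fin_two_of]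
          have hdet1 : -d * d - (-d - d ^ 2) / (1 + 2 * d) * ((2 * d ^ 2 - d - 1) / d) = -1 := by
            have h2d' : (1:F) + d * 2 ≠ 0 := by intro h; apply h2d; linear_combination h
            field_simp
            ring
          rw [hdet1]; exact (isUnit_one).neg
        · clear hroot M hb1 hb14 h2 h3 h2' h3'
          subst hB
          have h2d' : (1:F) + d * 2 ≠ 0 := by intro h; apply h2d; linear_combination h
          rw [mul_MSC, MSC_mul_kron]
          apply MSC_ext <;>
            first
              | rfl
              | (field_simp; try ring)
end

section
/- Let F be a field with char F ≠ 2 and char F ≠ 3, let β₁ ∈ F with β₁ ≠ 0, assume the polynomial β₁ - t³ has no root in F, and let A = A₁₁(β₁) = [[0, 0, 0, 1],[β₁, 0, 0, 0]]. Then the invertible 2×2 matrices g over F with gA = A(g⊗g) are exactly the matrices [[a,0],[0,a²]] with a ∈ F and a³ = 1, and the only 2×2 matrix D with DA = A(D⊗I₂ + I₂⊗D) is the zero matrix. -/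
open Matrix Kronecker

/-!
In `A₁₁(β)` the basis satisfies `e₁e₁ = β e₂`, `e₂e₂ = e₁` and `e₁e₂ = e₂e₁ = 0`. An automorphism
matrix with nonzero lower-left entry `g₂₁` must be antidiagonal, and then `e₁e₁ = β e₂` forces
`β = (g₁₂⁻¹)³`, which is excluded; a diagonal one is `diag(a, a²)` with `a = a⁴`. For a
derivation the same two products give `D₁₁ = 2 D₂₂ = 4 D₁₁`, so `3 D₁₁ = 0`.
-/

section A11

variable {F : Type*} [Field F]

abbrev A11 (b : F) : Matrix (Fin 2) (Fin 2 × Fin 2) F := MSC 0 0 0 1 b 0 0 0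

theorem mul_A11_eq_A11_mul_kronecker_iff (b : F) (g : Matrix (Fin 2) (Fin 2) F) :
    g * A11 b = A11 b * (g ⊗ₖ g) ↔
      g 0 1 * b = g 1 0 ^ 2 ∧ g 1 0 * g 1 1 = 0 ∧ g 0 0 = g 1 1 ^ 2 ∧
        g 1 1 * b = b * g 0 0 ^ 2 ∧ b * g 0 0 * g 0 1 = 0 ∧ g 1 0 = b * g 0 1 ^ 2 := by
  rw [← Matrix.ext_iff]
  simp [Fin.forall_fin_two, Prod.forall, MSC, mul_apply, Fintype.sum_prod_type,
    Fin.sum_univ_succ, finProdFinEquiv, sq]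
  tauto

theorem isDerMat_A11_iff {b : F} (hb : b ≠ 0) (D : Matrix (Fin 2) (Fin 2) F) :
    IsDerMat (A11 b) D ↔
      D 0 1 = 0 ∧ D 1 0 = 0 ∧ D 0 0 = 2 * D 1 1 ∧ D 1 1 = 2 * D 0 0 := by
  rw [IsDerMat, ← Matrix.ext_iff]
  simp [Fin.forall_fin_two, Prod.forall, MSC, mul_apply, Fintype.sum_prod_type,
    Fin.sum_univ_succ, finProdFinEquiv, one_apply, hb, two_mul, mul_comm b,
    eq_comm (a := (0 : F))]
  tauto

theorem isAutoMat_A11_iff {b : F} (hb : ∀ t : F, b - t ^ 3 ≠ 0) (g : Matrix (Fin 2) (Fin 2) F) :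
    IsAutoMat (A11 b) g ↔ ∃ a : F, a ^ 3 = 1 ∧ g = !![a, 0; 0, a ^ 2] := by
  rw [IsAutoMat, isUnit_iff_isUnit_det, det_fin_two, isUnit_iff_ne_zero,
    mul_A11_eq_A11_mul_kronecker_iff]
  have hb0 : b ≠ 0 := by simpa using hb 0
  constructor
  · rintro ⟨hdet, h01, h1011, h00, h11, -, h10⟩
    have hg10 : g 1 0 = 0 := by
      by_contra hg10
      have hg01 : g 0 1 ≠ 0 := fun h ↦ hg10 (by simp [h10, h])
      have hcube : b * g 0 1 ^ 3 = 1 := by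
        refine mul_left_cancel₀ (mul_ne_zero hg01 hb0) ?_
        linear_combination -(g 1 0 + b * g 0 1 ^ 2) * h10 - h01
      refine hb (g 0 1)⁻¹ ?_
      field_simp
      linear_combination hcube
    have hg01 : g 0 1 = 0 := by simpa [hg10, hb0] using h01
    have hg11 : g 1 1 = g 0 0 ^ 2 := mul_left_cancel₀ hb0 (by linear_combination h11)
    have hg00 : g 0 0 ≠ 0 := fun h ↦ hdet (by simp [h, hg01])
    refine ⟨g 0 0, mul_left_cancel₀ hg00 ?_, ?_⟩
    · linear_combination -h00 - (g 1 1 + g 0 0 ^ 2) * hg11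
    · ext i j
      fin_cases i <;> fin_cases j <;> simp [hg10, hg01, hg11]
  · rintro ⟨a, ha, rfl⟩
    simp only [of_apply, cons_val', cons_val_zero, cons_val_one, empty_val', cons_val_fin_one]
    refine ⟨by simp [← pow_succ', ha], by ring, by ring, ?_, by ring, by ring, by ring⟩
    linear_combination -a * ha

theorem isDerMat_A11_iff_eq_zero {b : F} (hb : b ≠ 0) (h3 : (3 : F) ≠ 0)
    (D : Matrix (Fin 2) (Fin 2) F) : IsDerMat (A11 b) D ↔ D = 0 := by
  rw [isDerMat_A11_iff hb]
  constructor
  · rintro ⟨h01, h10, h00, h11⟩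
    have h3D00 : (3 : F) * D 0 0 = 0 := by linear_combination -h00 - 2 * h11
    have hD00 : D 0 0 = 0 := (mul_eq_zero.1 h3D00).resolve_left h3
    ext i j
    fin_cases i <;> fin_cases j <;> simp [h01, h10, hD00, h11]
  · rintro rfl
    simp

end A11

theorem stmt_12_general {F : Type*} [Field F] (h3 : ringChar F ≠ 3)
    (b1 : F) (hb1 : b1 ≠ 0)
    (hroot : ∀ t : F, b1 - t ^ 3 ≠ 0)
    (A : Matrix (Fin 2) (Fin 2 × Fin 2) F)
    (hA : A = MSC 0 0 0 1 b1 0 0 0) :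
    (∀ g : Matrix (Fin 2) (Fin 2) F,
      IsAutoMat A g ↔ ∃ a : F, a ^ 3 = 1 ∧ g = !![a, 0; 0, a ^ 2]) ∧
    (∀ D : Matrix (Fin 2) (Fin 2) F, IsDerMat A D ↔ D = 0) := by
  subst hA
  have h3' : (3 : F) ≠ 0 := fun h ↦
    h3 (CharP.ringChar_of_prime_eq_zero Nat.prime_three (by exact_mod_cast h))
  exact ⟨isAutoMat_A11_iff hroot, isDerMat_A11_iff_eq_zero hb1 h3'⟩

theorem stmt_12 {F : Type*} [Field F] (h2 : ringChar F ≠ 2) (h3 : ringChar F ≠ 3)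
    (b1 : F) (hb1 : b1 ≠ 0)
    (hroot : ∀ t : F, b1 - t ^ 3 ≠ 0)
    (A : Matrix (Fin 2) (Fin 2 × Fin 2) F)
    (hA : A = MSC 0 0 0 1 b1 0 0 0) :
    (∀ g : Matrix (Fin 2) (Fin 2) F,
      IsAutoMat A g ↔ ∃ a : F, a ^ 3 = 1 ∧ g = !![a, 0; 0, a ^ 2]) ∧
    (∀ D : Matrix (Fin 2) (Fin 2) F, IsDerMat A D ↔ D = 0) :=
  stmt_12_general h3 b1 hb1 hroot A hA
end

section
/- Let F be a field with char F ≠ 2 and char F ≠ 3, let β₁ ∈ F, and let A = A₁₂(β₁) = [[0, 1, 1, 0],[β₁, 0, 0, -1]]. Then: (i) if β₁ ≠ 0, the invertible 2×2 matrices g with gA = A(g⊗g) are exactly the matrices [[ε,0],[0,1]] with ε = ±1, together with the matrices [[ε/2, b],[3ε/(4b), -1/2]] for ε = ±1 and those b ∈ F with b ≠ 0 and β₁ = 3/(4b²); moreover the only matrix D with DA = A(D⊗I₂ + I₂⊗D) is 0. (ii) if β₁ = 0, the automorphism matrices are exactly [[a,0],[0,1]] with a ∈ F, a ≠ 0, and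 the derivation matrices are exactly [[a,0],[0,0]] with a ∈ F. -/
open Matrix Kronecker

lemma fpe0 : finProdFinEquiv ((0:Fin 2),(0:Fin 2)) = (0 : Fin 4) := rfl
lemma fpe1 : finProdFinEquiv ((0:Fin 2),(1:Fin 2)) = (1 : Fin 4) := rfl
lemma fpe2 : finProdFinEquiv ((1:Fin 2),(0:Fin 2)) = (2 : Fin 4) := rfl
lemma fpe3 : finProdFinEquiv ((1:Fin 2),(1:Fin 2)) = (3 : Fin 4) := rfl

lemma autoEq_iff {F : Type*} [Field F] (b1 : F) (g : Matrix (Fin 2) (Fin 2) F) :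
    (g * MSC 0 1 1 0 b1 0 0 (-1) = MSC 0 1 1 0 b1 0 0 (-1) * (g ⊗ₖ g)) ↔
    (((g 0 1 * b1 = g 0 0 * g 1 0 + g 1 0 * g 0 0 ∧ g 0 0 = g 0 0 * g 1 1 + g 1 0 * g 0 1) ∧
      g 0 0 = g 0 1 * g 1 0 + g 1 1 * g 0 0 ∧ -g 0 1 = g 0 1 * g 1 1 + g 1 1 * g 0 1) ∧
    (g 1 1 * b1 = b1 * (g 0 0 * g 0 0) + -(g 1 0 * g 1 0) ∧
      g 1 0 = b1 * (g 0 0 * g 0 1) + -(g 1 0 * g 1 1)) ∧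
      g 1 0 = b1 * (g 0 1 * g 0 0) + -(g 1 1 * g 1 0) ∧
      -g 1 1 = b1 * (g 0 1 * g 0 1) + -(g 1 1 * g 1 1)) := by
  rw [← Matrix.ext_iff]
  simp only [Fin.forall_fin_two, Prod.forall, Matrix.mul_apply, MSC, Fin.sum_univ_two,
    Fintype.sum_prod_type, Matrix.of_apply, kroneckerMap_apply, fpe0, fpe1, fpe2, fpe3,
    Matrix.cons_val', Matrix.cons_val_zero, Matrix.cons_val_one, Matrix.head_cons,
    Matrix.empty_val', Matrix.cons_val_fin_one, Matrix.head_fin_const, Matrix.cons_val]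
  norm_num

lemma derEq_iff {F : Type*} [Field F] (b1 : F) (D : Matrix (Fin 2) (Fin 2) F) :
    (D * MSC 0 1 1 0 b1 0 0 (-1) = MSC 0 1 1 0 b1 0 0 (-1) *
      (D ⊗ₖ (1 : Matrix (Fin 2) (Fin 2) F) + (1 : Matrix (Fin 2) (Fin 2) F) ⊗ₖ D)) ↔
    (((D 0 1 * b1 = D 1 0 + D 1 0 ∧ D 1 1 = 0) ∧ D 1 1 = 0 ∧ -D 0 1 = D 0 1 + D 0 1) ∧
      (D 1 1 * b1 = b1 * (D 0 0 + D 0 0) ∧ D 1 0 = b1 * D 0 1 + -D 1 0) ∧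
      D 1 0 = b1 * D 0 1 + -D 1 0 ∧ D 1 1 = 0) := by
  rw [← Matrix.ext_iff]
  simp only [Fin.forall_fin_two, Prod.forall, Matrix.mul_apply, MSC, Fin.sum_univ_two,
    Fintype.sum_prod_type, Matrix.of_apply, kroneckerMap_apply, fpe0, fpe1, fpe2, fpe3,
    Matrix.add_apply, Matrix.one_apply, Matrix.cons_val', Matrix.cons_val_zero,
    Matrix.cons_val_one, Matrix.head_cons, Matrix.empty_val', Matrix.cons_val_fin_one,
    Matrix.head_fin_const, Matrix.cons_val]
  norm_num

lemma ext_fin_two {F : Type*} [Field F] (g : Matrix (Fin 2) (Fin 2) F) (a b c d : F)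
    (h1 : g 0 0 = a) (h2 : g 0 1 = b) (h3 : g 1 0 = c) (h4 : g 1 1 = d) :
    g = !![a, b; c, d] := by
  rw [Matrix.eta_fin_two g, h1, h2, h3, h4]

lemma zero_fin_two' {F : Type*} [Field F] : (!![0, 0; 0, 0] : Matrix (Fin 2) (Fin 2) F) = 0 := by
  ext i j
  fin_cases i <;> fin_cases j <;> rfl

theorem stmt_13 {F : Type*} [Field F] (h2 : ringChar F ≠ 2) (h3 : ringChar F ≠ 3)
    (b1 : F)
    (A : Matrix (Fin 2) (Fin 2 × Fin 2) F)
    (hA : A = MSC 0 1 1 0 b1 0 0 (-1)) :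
    (b1 ≠ 0 →
      (∀ g : Matrix (Fin 2) (Fin 2) F,
        IsAutoMat A g ↔
          (∃ e : F, (e = 1 ∨ e = -1) ∧ g = !![e, 0; 0, 1]) ∨
          (∃ e b : F, (e = 1 ∨ e = -1) ∧ b ≠ 0 ∧ b1 = 3 / (4 * b ^ 2) ∧
            g = !![e / 2, b; 3 * e / (4 * b), -(1 / 2)])) ∧
      (∀ D : Matrix (Fin 2) (Fin 2) F, IsDerMat A D ↔ D = 0)) ∧
    (b1 = 0 →
      (∀ g : Matrix (Fin 2) (Fin 2) F,
        IsAutoMat A g ↔ ∃ a : F, a ≠ 0 ∧ g = !![a, 0; 0, 1]) ∧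
      (∀ D : Matrix (Fin 2) (Fin 2) F,
        IsDerMat A D ↔ ∃ a : F, D = !![a, 0; 0, 0])) := by
  subst hA
  have two_ne : (2:F) ≠ 0 := by
    intro h
    have hd : ringChar F ∣ 2 := (CharP.cast_eq_zero_iff F (ringChar F) 2).mp (by exact_mod_cast h)
    rcases (Nat.prime_two.eq_one_or_self_of_dvd _ hd) with h1 | h1
    · exact CharP.ringChar_ne_one h1
    · exact h2 h1
  have three_ne : (3:F) ≠ 0 := by
    intro h
    have hd : ringChar F ∣ 3 := (CharP.cast_eq_zero_iff F (ringChar F) 3).mp (by exact_mod_cast h)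
    rcases (Nat.prime_three.eq_one_or_self_of_dvd _ hd) with h1 | h1
    · exact CharP.ringChar_ne_one h1
    · exact h3 h1
  have four_ne : (4:F) ≠ 0 := by
    have := mul_ne_zero two_ne two_ne
    rwa [show (2:F) * 2 = 4 by norm_num] at this
  constructor
  · intro hb1
    constructor
    · intro g
      constructor
      · rintro ⟨hu, he⟩
        rw [autoEq_iff] at he
        obtain ⟨⟨⟨h1, h2'⟩, h3', h4⟩, ⟨h5, h6⟩, h7, h8⟩ := he
        have hdet : g 0 0 * g 1 1 - g 0 1 * g 1 0 ≠ 0 := by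
          have := (Matrix.isUnit_iff_isUnit_det g).mp hu
          rwa [Matrix.det_fin_two, isUnit_iff_ne_zero] at this
        by_cases hb : g 0 1 = 0
        · left
          have ha : g 0 0 ≠ 0 := fun h => hdet (by rw [h, hb]; ring)
          have hd : g 1 1 = 1 := by
            have hkey : g 0 0 * (1 - g 1 1) = 0 := by
              linear_combination h2' + g 1 0 * hb
            rcases mul_eq_zero.mp hkey with h | h
            · exact absurd h ha
            · linear_combination -h
          have hc : g 1 0 = 0 := by
            have h2c : 2 * g 1 0 = 0 := by
              linear_combination h6 + b1 * g 0 0 * hb - g 1 0 * hd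
            exact (mul_eq_zero.mp h2c).resolve_left two_ne
          have ha2 : g 0 0 * g 0 0 = 1 := by
            have hkey : b1 * (g 0 0 * g 0 0 - 1) = 0 := by
              linear_combination -h5 + b1 * hd + g 1 0 * hc
            have := (mul_eq_zero.mp hkey).resolve_left hb1
            linear_combination this
          have hor : g 0 0 = 1 ∨ g 0 0 = -1 := by
            rcases mul_eq_zero.mp (show (g 0 0 - 1) * (g 0 0 + 1) = 0 by
              linear_combination ha2) with h | h
            · left; linear_combination h
            · right; linear_combination h
          exact ⟨g 0 0, hor, ext_fin_two g _ _ _ _ rfl hb hc hd⟩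
        · right
          have h2d : 2 * g 1 1 + 1 = 0 := by
            have hkey : g 0 1 * (2 * g 1 1 + 1) = 0 := by linear_combination -h4
            exact (mul_eq_zero.mp hkey).resolve_left hb
          have h2cb : 2 * (g 1 0 * g 0 1) = 3 * g 0 0 := by
            linear_combination -2 * h2' - g 0 0 * h2d
          have hc2 : g 1 0 = 2 * (b1 * (g 0 0 * g 0 1)) := by
            linear_combination 2 * h6 - g 1 0 * h2d
          have ha4 : 4 * (g 0 0 * g 0 0) = 1 := by
            have hkey : b1 * g 0 1 * (4 * (g 0 0 * g 0 0) - 1) = 0 := by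
              linear_combination -h1 - 2 * g 0 0 * hc2
            have := (mul_eq_zero.mp hkey).resolve_left (mul_ne_zero hb1 hb)
            linear_combination this
          have ha : g 0 0 ≠ 0 := by
            intro h
            exact one_ne_zero (by linear_combination -ha4 + 4 * g 0 0 * h : (1:F) = 0)
          have hb1v : 4 * (b1 * (g 0 1 * g 0 1)) = 3 := by
            have hkey : g 0 0 * (4 * (b1 * (g 0 1 * g 0 1)) - 3) = 0 := by
              linear_combination h2cb - 2 * g 0 1 * hc2
            have := (mul_eq_zero.mp hkey).resolve_left ha
            linear_combination this
          have heor : 2 * g 0 0 = 1 ∨ 2 * g 0 0 = -1 := by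
            rcases mul_eq_zero.mp (show (2 * g 0 0 - 1) * (2 * g 0 0 + 1) = 0 by
              linear_combination ha4) with h | h
            · left; linear_combination h
            · right; linear_combination h
          have e1 : g 0 0 = 2 * g 0 0 / 2 := (mul_div_cancel_left₀ _ two_ne).symm
          have e2 : g 1 0 = 3 * (2 * g 0 0) / (4 * g 0 1) := by
            rw [eq_div_iff (mul_ne_zero four_ne hb)]
            linear_combination 2 * h2cb
          have e3 : g 1 1 = -(1/2) := by
            rw [show -(1/2 : F) = (-1)/2 by ring, eq_div_iff two_ne]
            linear_combination h2d
          refine ⟨2 * g 0 0, g 0 1, heor, hb, ?_, ext_fin_two g _ _ _ _ e1 rfl e2 e3⟩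
          rw [eq_div_iff (mul_ne_zero four_ne (pow_ne_zero 2 hb))]
          linear_combination hb1v
      · rintro (⟨e, he, rfl⟩ | ⟨e, b, he, hbne, hb1v, rfl⟩)
        · constructor
          · rw [Matrix.isUnit_iff_isUnit_det, Matrix.det_fin_two_of, isUnit_iff_ne_zero]
            rcases he with rfl | rfl <;> norm_num
          · rw [autoEq_iff]
            rcases he with rfl | rfl <;>
              norm_num [Matrix.cons_val', Matrix.cons_val_zero, Matrix.cons_val_one,
                Matrix.head_cons, Matrix.empty_val', Matrix.cons_val_fin_one,
                Matrix.head_fin_const]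
        · subst hb1v
          have hb2 : (4:F) * b ^ 2 ≠ 0 := mul_ne_zero four_ne (pow_ne_zero 2 hbne)
          constructor
          · rw [Matrix.isUnit_iff_isUnit_det, Matrix.det_fin_two_of, isUnit_iff_ne_zero]
            have hdv : e / 2 * -(1 / 2) - b * (3 * e / (4 * b)) = -e := by
              field_simp
              ring
            rw [hdv]
            rcases he with rfl | rfl <;> norm_num
          · rw [autoEq_iff]
            simp only [Matrix.of_apply, Matrix.cons_val', Matrix.cons_val_zero,
              Matrix.cons_val_one, Matrix.head_cons, Matrix.empty_val',
              Matrix.cons_val_fin_one, Matrix.head_fin_const]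
            rcases he with rfl | rfl <;>
              refine ⟨⟨⟨?_, ?_⟩, ?_, ?_⟩, ⟨?_, ?_⟩, ?_, ?_⟩ <;> field_simp <;> ring
    · intro D
      constructor
      · intro h
        rw [IsDerMat, derEq_iff] at h
        obtain ⟨⟨⟨h1, hd⟩, -, h4⟩, ⟨h5, h6⟩, -, -⟩ := h
        have hb : D 0 1 = 0 := by
          have h3b : 3 * D 0 1 = 0 := by linear_combination -h4
          exact (mul_eq_zero.mp h3b).resolve_left three_ne
        have hc : D 1 0 = 0 := by
          have h2c : 2 * D 1 0 = 0 := by linear_combination h6 + b1 * hb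
          exact (mul_eq_zero.mp h2c).resolve_left two_ne
        have ha : D 0 0 = 0 := by
          have hkey : b1 * (2 * D 0 0) = 0 := by linear_combination -h5 + b1 * hd
          have h2a := (mul_eq_zero.mp hkey).resolve_left hb1
          exact (mul_eq_zero.mp h2a).resolve_left two_ne
        rw [ext_fin_two D 0 0 0 0 ha hb hc hd, zero_fin_two']
      · rintro rfl
        rw [IsDerMat, derEq_iff]
        norm_num
  · rintro rfl
    constructor
    · intro g
      constructor
      · rintro ⟨hu, he⟩
        rw [autoEq_iff] at he
        obtain ⟨⟨⟨h1, h2'⟩, h3', h4⟩, ⟨h5, h6⟩, h7, h8⟩ := he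
        have hdet : g 0 0 * g 1 1 - g 0 1 * g 1 0 ≠ 0 := by
          have := (Matrix.isUnit_iff_isUnit_det g).mp hu
          rwa [Matrix.det_fin_two, isUnit_iff_ne_zero] at this
        by_cases hb : g 0 1 = 0
        · have ha : g 0 0 ≠ 0 := fun h => hdet (by rw [h, hb]; ring)
          have hd : g 1 1 = 1 := by
            have hkey : g 0 0 * (1 - g 1 1) = 0 := by
              linear_combination h2' + g 1 0 * hb
            rcases mul_eq_zero.mp hkey with h | h
            · exact absurd h ha
            · linear_combination -h
          have hc : g 1 0 = 0 := by
            have h2c : 2 * g 1 0 = 0 := by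
              linear_combination h6 - g 1 0 * hd
            exact (mul_eq_zero.mp h2c).resolve_left two_ne
          exact ⟨g 0 0, ha, ext_fin_two g _ _ _ _ rfl hb hc hd⟩
        · exfalso
          have h2d : 2 * g 1 1 + 1 = 0 := by
            have hkey : g 0 1 * (2 * g 1 1 + 1) = 0 := by linear_combination -h4
            exact (mul_eq_zero.mp hkey).resolve_left hb
          have hc2 : g 1 0 = 0 := by
            have h2c : 2 * g 1 0 = 0 := by
              linear_combination 4 * h6 - 2 * g 1 0 * h2d
            exact (mul_eq_zero.mp h2c).resolve_left two_ne
          have ha0 : g 0 0 = 0 := by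
            have h3a : 3 * g 0 0 = 0 := by
              linear_combination 2 * h2' + g 0 0 * h2d + 2 * g 0 1 * hc2
            exact (mul_eq_zero.mp h3a).resolve_left three_ne
          exact hdet (by rw [ha0, hc2]; ring)
      · rintro ⟨a, ha, rfl⟩
        constructor
        · rw [Matrix.isUnit_iff_isUnit_det, Matrix.det_fin_two_of, isUnit_iff_ne_zero]
          simpa using ha
        · rw [autoEq_iff]
          norm_num
    · intro D
      constructor
      · intro h
        rw [IsDerMat, derEq_iff] at h
        obtain ⟨⟨⟨h1, hd⟩, -, h4⟩, ⟨h5, h6⟩, -, -⟩ := h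
        have hb : D 0 1 = 0 := by
          have h3b : 3 * D 0 1 = 0 := by linear_combination -h4
          exact (mul_eq_zero.mp h3b).resolve_left three_ne
        have hc : D 1 0 = 0 := by
          have h2c : 2 * D 1 0 = 0 := by linear_combination h6
          exact (mul_eq_zero.mp h2c).resolve_left two_ne
        exact ⟨D 0 0, ext_fin_two D _ _ _ _ rfl hb hc hd⟩
      · rintro ⟨a, rfl⟩
        rw [IsDerMat, derEq_iff]
        norm_num
end

section
/- Let F be a field with char F ≠ 2 and char F ≠ 3, and let A = A₁₃ = [[0, 0, 0, 0],[1, 0, 0, 0]]. Then the invertible 2×2 matrices g over F with gA = A(g⊗g) are exactly the matrices [[a,0],[c,a²]] with a,c ∈ F, a ≠ 0, and the 2×2 matrices D with DA = A(D⊗I₂ + I₂⊗D) are exactly the matrices [[a,0],[c,2a]] with a,c ∈ F. -/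
open Matrix Kronecker

/-!
In `A₁₃` the only nonzero product is `e₀ · e₀ = e₁`. Hence `M * A₁₃` has a single nonzero column,
the second column of `M`, placed at `(0, 0)`, while `A₁₃ * N` has a single nonzero row, the row
`(0, 0)` of `N`, placed at `1`. So `M * A₁₃ = A₁₃ * N` says exactly that `M 0 1 = 0` and that row
`(0, 0)` of `N` is `M 1 1` at `(0, 0)` and zero elsewhere. For `N = g ⊗ g` and `N = D ⊗ 1 + 1 ⊗ D`
this row is read off directly.
-/

abbrev mscA13 (F : Type*) [Field F] : Matrix (Fin 2) (Fin 2 × Fin 2) F := MSC 0 0 0 0 1 0 0 0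

section

variable {F : Type*} [Field F]

lemma mul_mscA13_apply (M : Matrix (Fin 2) (Fin 2) F) (i : Fin 2) (c : Fin 2 × Fin 2) :
    (M * mscA13 F) i c = if c = (0, 0) then M i 1 else 0 := by
  obtain ⟨j, k⟩ := c
  fin_cases j <;> fin_cases k <;> simp [mul_apply, MSC, Fin.sum_univ_two, finProdFinEquiv]

lemma mscA13_mul_apply (N : Matrix (Fin 2 × Fin 2) (Fin 2 × Fin 2) F) (i : Fin 2)
    (c : Fin 2 × Fin 2) : (mscA13 F * N) i c = if i = 1 then N (0, 0) c else 0 := by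
  fin_cases i <;> simp [mul_apply, MSC, Fintype.sum_prod_type, Fin.sum_univ_two, finProdFinEquiv]

lemma mul_mscA13_eq_mscA13_mul_iff (M : Matrix (Fin 2) (Fin 2) F)
    (N : Matrix (Fin 2 × Fin 2) (Fin 2 × Fin 2) F) :
    M * mscA13 F = mscA13 F * N ↔ M 0 1 = 0 ∧ N (0, 0) = Pi.single (0, 0) (M 1 1) := by
  simp only [← Matrix.ext_iff, mul_mscA13_apply, mscA13_mul_apply]
  constructor
  · intro h
    refine ⟨by simpa using h 0 (0, 0), funext fun c => ?_⟩
    simpa [Pi.single_apply] using (h 1 c).symm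
  · rintro ⟨h01, hN⟩ i c
    fin_cases i <;> simp [hN, h01, Pi.single_apply]

lemma isAutoMat_mscA13_iff (g : Matrix (Fin 2) (Fin 2) F) :
    IsAutoMat (mscA13 F) g ↔ g 0 0 ≠ 0 ∧ g 0 1 = 0 ∧ g 1 1 = g 0 0 ^ 2 := by
  rw [IsAutoMat, mul_mscA13_eq_mscA13_mul_iff, isUnit_iff_isUnit_det, det_fin_two,
    isUnit_iff_ne_zero]
  constructor
  · rintro ⟨hdet, h01, hrow⟩
    have h11 : g 0 0 ^ 2 = g 1 1 := by simpa [sq] using congrFun hrow (0, 0)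
    refine ⟨fun h00 => ?_, h01, h11.symm⟩
    simp [h00, h01] at hdet
  · rintro ⟨h00, h01, h11⟩
    refine ⟨by simp [h00, h01, h11], h01, funext fun ⟨j, k⟩ => ?_⟩
    fin_cases j <;> fin_cases k <;> simp [h01, h11, sq]

lemma isDerMat_mscA13_iff (D : Matrix (Fin 2) (Fin 2) F) :
    IsDerMat (mscA13 F) D ↔ D 0 1 = 0 ∧ D 1 1 = 2 * D 0 0 := by
  rw [IsDerMat, mul_mscA13_eq_mscA13_mul_iff]
  constructor
  · rintro ⟨h01, hrow⟩
    refine ⟨h01, ?_⟩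
    have h11 : D 0 0 + D 0 0 = D 1 1 := by simpa [one_apply] using congrFun hrow (0, 0)
    rw [← h11, two_mul]
  · rintro ⟨h01, h11⟩
    refine ⟨h01, funext fun ⟨j, k⟩ => ?_⟩
    fin_cases j <;> fin_cases k <;> simp [one_apply, h01, h11, two_mul]

end

theorem stmt_14_general {F : Type*} [Field F]
    (A : Matrix (Fin 2) (Fin 2 × Fin 2) F)
    (hA : A = MSC 0 0 0 0 1 0 0 0) :
    (∀ g : Matrix (Fin 2) (Fin 2) F,
      IsAutoMat A g ↔ ∃ a c : F, a ≠ 0 ∧ g = !![a, 0; c, a ^ 2]) ∧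
    (∀ D : Matrix (Fin 2) (Fin 2) F,
      IsDerMat A D ↔ ∃ a c : F, D = !![a, 0; c, 2 * a]) := by
  subst hA
  refine ⟨fun g => ?_, fun D => ?_⟩
  · rw [isAutoMat_mscA13_iff]
    constructor
    · rintro ⟨h00, h01, h11⟩
      exact ⟨g 0 0, g 1 0, h00, (eta_fin_two g).trans (by rw [h01, h11])⟩
    · rintro ⟨a, c, ha, rfl⟩
      simp [ha]
  · rw [isDerMat_mscA13_iff]
    constructor
    · rintro ⟨h01, h11⟩
      exact ⟨D 0 0, D 1 0, (eta_fin_two D).trans (by rw [h01, h11])⟩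
    · rintro ⟨a, c, rfl⟩
      simp

theorem stmt_14 {F : Type*} [Field F] (h2 : ringChar F ≠ 2) (h3 : ringChar F ≠ 3)
    (A : Matrix (Fin 2) (Fin 2 × Fin 2) F)
    (hA : A = MSC 0 0 0 0 1 0 0 0) :
    (∀ g : Matrix (Fin 2) (Fin 2) F,
      IsAutoMat A g ↔ ∃ a c : F, a ≠ 0 ∧ g = !![a, 0; c, a ^ 2]) ∧
    (∀ D : Matrix (Fin 2) (Fin 2) F,
      IsDerMat A D ↔ ∃ a c : F, D = !![a, 0; c, 2 * a]) :=
  stmt_14_general A hA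
end

section
/- Let F be a field with char F = 2, let α₁,α₂,α₄,β₁ ∈ F, and let A = A_{1,2}(α₁,α₂,α₄,β₁) = [[α₁, α₂, α₂+1, α₄],[β₁, α₁, 1+α₁, α₂]]. Then the only invertible 2×2 matrix g over F with gA = A(g⊗g) is the identity matrix, and the only 2×2 matrix D with DA = A(D⊗I₂ + I₂⊗D) is the zero matrix. -/
/-
In any 2-dimensional algebra an automorphism `g` multiplies the commutator `e₀e₁ - e₁e₀` by
`det g`, and a derivation `D` multiplies it by `tr D`. In `A₁,₂` this commutator is `-(e₀ + e₁)`,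
so `(1, 1)ᵀ` is an eigenvector of `g` and of `D`; with `det g ≠ 0` this leaves the two-parameter
families `g = [[1 + s, t - s], [s, 1 + t - s]]` and `D = [[x, y], [x, y]]`. Reduced modulo 2, the
remaining structure equations force `s = t = 0` and `x = y = 0`: the sums of paired entries give
`(α₁ + α₂ + α₄ + β₁) s² = (α₁ + α₂ + α₄ + β₁) (s + t)² = 0`, and when `α₁ + α₂ + α₄ + β₁ = 0` a
further split on `α₁ + α₄` finishes.
-/

open Matrix Kronecker

section CommRing

variable {R : Type*} [CommRing R]

def commutatorVec (A : Matrix (Fin 2) (Fin 2 × Fin 2) R) : Fin 2 → R :=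
  fun i => A i (0, 1) - A i (1, 0)

theorem mulVec_commutatorVec_of_mul_eq_mul_kronecker {A : Matrix (Fin 2) (Fin 2 × Fin 2) R}
    {g : Matrix (Fin 2) (Fin 2) R} (h : g * A = A * (g ⊗ₖ g)) :
    g *ᵥ commutatorVec A = g.det • commutatorVec A := by
  ext i
  have h01 := congrFun (congrFun h i) (0, 1)
  have h10 := congrFun (congrFun h i) (1, 0)
  simp only [mul_apply, Fintype.sum_prod_type, Fin.sum_univ_two, kroneckerMap_apply] at h01 h10
  simp only [commutatorVec, mulVec, dotProduct, Fin.sum_univ_two, det_fin_two, Pi.smul_apply,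
    smul_eq_mul]
  linear_combination h01 - h10

theorem mulVec_commutatorVec_of_mul_eq_mul_kronecker_add {A : Matrix (Fin 2) (Fin 2 × Fin 2) R}
    {D : Matrix (Fin 2) (Fin 2) R} (h : D * A = A * (D ⊗ₖ 1 + 1 ⊗ₖ D)) :
    D *ᵥ commutatorVec A = D.trace • commutatorVec A := by
  ext i
  have h01 := congrFun (congrFun h i) (0, 1)
  have h10 := congrFun (congrFun h i) (1, 0)
  simp only [mul_apply, Fin.sum_univ_two, Matrix.add_apply, kroneckerMap_apply, one_apply, mul_ite,
    mul_one, mul_zero, ite_mul, one_mul, zero_mul, Fintype.sum_prod_type, zero_ne_one, ↓reduceIte,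
    zero_add, one_ne_zero, add_zero] at h01 h10
  simp only [commutatorVec, mulVec, dotProduct, Fin.sum_univ_two, trace_fin_two, Pi.smul_apply,
    smul_eq_mul]
  linear_combination h01 - h10

theorem exists_eq_of_mulVec_one_eq_det_smul {g : Matrix (Fin 2) (Fin 2) R}
    (h : g *ᵥ 1 = g.det • 1) (hg : IsUnit g.det) :
    ∃ s t, g = !![1 + s, t - s; s, 1 + t - s] := by
  have h0 := congrFun h 0
  have h1 := congrFun h 1
  simp only [mulVec, dotProduct, Fin.sum_univ_two, Pi.one_apply, mul_one, Pi.smul_apply,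
    smul_eq_mul] at h0 h1
  have hcol : g 0 0 - g 1 0 = 1 := by
    refine hg.mul_left_cancel ?_
    linear_combination -g 0 0 * h1 + g 1 0 * h0 - g.det_fin_two
  refine ⟨g 1 0, g.det - 1, ?_⟩
  ext i j
  fin_cases i <;> fin_cases j <;>
    simp only [Fin.zero_eta, Fin.mk_one, Fin.isValue, add_sub_cancel, of_apply, cons_val',
      cons_val_zero, cons_val_one, cons_val_fin_one]
  · linear_combination hcol
  · linear_combination h0 - hcol
  · linear_combination h1

theorem exists_eq_of_mulVec_one_eq_trace_smul {D : Matrix (Fin 2) (Fin 2) R}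
    (h : D *ᵥ 1 = D.trace • 1) : ∃ x y, D = !![x, y; x, y] := by
  have h0 := congrFun h 0
  have h1 := congrFun h 1
  simp only [mulVec, dotProduct, Fin.sum_univ_two, Pi.one_apply, mul_one, Pi.smul_apply,
    smul_eq_mul, trace_fin_two] at h0 h1
  refine ⟨D 0 0, D 1 1, ?_⟩
  ext i j
  fin_cases i <;> fin_cases j <;>
    simp only [Fin.zero_eta, Fin.mk_one, Fin.isValue, of_apply, cons_val',
      cons_val_zero, cons_val_one, cons_val_fin_one]
  · linear_combination h0
  · linear_combination h1

end CommRing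

section Field

variable {F : Type*} [Field F]

def A12 (a1 a2 a4 b1 : F) : Matrix (Fin 2) (Fin 2 × Fin 2) F :=
  MSC a1 a2 (a2 + 1) a4 b1 a1 (1 + a1) a2

variable {a1 a2 a4 b1 : F}

theorem commutatorVec_A12 : commutatorVec (A12 a1 a2 a4 b1) = -1 := by
  ext i; fin_cases i <;> simp [commutatorVec, A12, MSC, finProdFinEquiv]

theorem IsAutoMat.mulVec_one_A12 {g : Matrix (Fin 2) (Fin 2) F}
    (h : IsAutoMat (A12 a1 a2 a4 b1) g) : g *ᵥ 1 = g.det • 1 := by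
  have hc := mulVec_commutatorVec_of_mul_eq_mul_kronecker h.2
  rwa [commutatorVec_A12, mulVec_neg, smul_neg, neg_inj] at hc

theorem IsDerMat.mulVec_one_A12 {D : Matrix (Fin 2) (Fin 2) F}
    (h : IsDerMat (A12 a1 a2 a4 b1) D) : D *ᵥ 1 = D.trace • 1 := by
  have hc := mulVec_commutatorVec_of_mul_eq_mul_kronecker_add h
  rwa [commutatorVec_A12, mulVec_neg, smul_neg, neg_inj] at hc

-- `ring` cannot use the characteristic, but `grind`'s normalizer does: it closes the identities
-- below, which hold only modulo 2.
variable [CharP F 2]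

theorem eq_zero_of_isAutoMat_A12 {s t : F}
    (h : IsAutoMat (A12 a1 a2 a4 b1) !![1 + s, t - s; s, 1 + t - s]) : s = 0 ∧ t = 0 := by
  obtain ⟨hunit, h⟩ := h
  have ht : 1 + t ≠ 0 := by
    rw [isUnit_iff_isUnit_det, det_fin_two_of, isUnit_iff_ne_zero] at hunit
    convert hunit using 1; ring
  have e : ∀ i j, _ := fun i j => congrFun (congrFun h i) j
  have E00 := e 0 (0, 0)
  have E01 := e 0 (0, 1)
  have E11 := e 0 (1, 1)
  have F00 := e 1 (0, 0)
  have F01 := e 1 (0, 1)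
  have F11 := e 1 (1, 1)
  simp only [A12, MSC, Nat.reduceMul, finProdFinEquiv, Equiv.coe_fn_mk, of_apply, cons_val',
    cons_val_fin_one, Fin.isValue, mul_apply, cons_val_zero, Fin.coe_ofNat_eq_mod, Nat.zero_mod,
    mul_zero, add_zero, Fin.zero_eta, Fin.sum_univ_two, cons_val_one, kroneckerMap_apply,
    Fintype.sum_prod_type, zero_add, Nat.mod_succ, Fin.mk_one, mul_one, Fin.reduceFinMk, cons_val,
    Nat.reduceAdd] at E00 E01 E11 F00 F01 F11
  have hs : (a1 + a2 + a4 + b1) * s ^ 2 = 0 := by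
    linear_combination (norm := grind only) E00 + F00
  have hst : (a1 + a2 + a4 + b1) * (s + t) ^ 2 = 0 := by
    linear_combination (norm := grind only) E11 + F11
  by_cases hσ : a1 + a2 + a4 + b1 = 0
  · obtain rfl : b1 = a1 + a2 + a4 := by linear_combination (norm := grind only) hσ
    by_cases ha : a1 + a4 = 0
    · obtain rfl : a4 = a1 := by linear_combination (norm := grind only) ha
      have htt : t * (1 + t) = 0 := by linear_combination (norm := grind only) E11 + E00
      obtain rfl : t = 0 := (mul_eq_zero.mp htt).resolve_right ht
      exact ⟨by linear_combination (norm := grind only) E00 + E01, rfl⟩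
    · have hat : (a1 + a4) * t = 0 := by linear_combination (norm := grind only) E01 + F01
      obtain rfl : t = 0 := (mul_eq_zero.mp hat).resolve_left ha
      exact ⟨by linear_combination (norm := grind only) E00 + E01, rfl⟩
  · have hs0 := pow_eq_zero_iff two_ne_zero |>.mp ((mul_eq_zero.mp hs).resolve_left hσ)
    have hst0 := pow_eq_zero_iff two_ne_zero |>.mp ((mul_eq_zero.mp hst).resolve_left hσ)
    exact ⟨hs0, by linear_combination hst0 - hs0⟩

theorem eq_zero_of_isDerMat_A12 {x y : F}
    (h : IsDerMat (A12 a1 a2 a4 b1) !![x, y; x, y]) : x = 0 ∧ y = 0 := by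
  have e : ∀ i j, _ := fun i j => congrFun (congrFun h i) j
  have E00 := e 0 (0, 0)
  have E01 := e 0 (0, 1)
  have E11 := e 0 (1, 1)
  have F01 := e 1 (0, 1)
  simp only [A12, MSC, Nat.reduceMul, finProdFinEquiv, Equiv.coe_fn_mk, of_apply, cons_val',
    cons_val_fin_one, Fin.isValue, mul_apply, cons_val_zero, Fin.coe_ofNat_eq_mod, Nat.zero_mod,
    mul_zero, add_zero, Fin.zero_eta, Fin.sum_univ_two, cons_val_one, Matrix.add_apply,
    kroneckerMap_apply, one_apply, mul_ite, mul_one, ite_mul, one_mul, zero_mul,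
    Fintype.sum_prod_type, zero_add, ↓reduceIte, Nat.mod_succ, one_ne_zero, Fin.mk_one,
    Fin.reduceFinMk, cons_val, zero_ne_one, Nat.reduceAdd] at E00 E01 E11 F01
  exact ⟨by linear_combination (norm := grind only) E00 + F01,
    by linear_combination (norm := grind only) E11 + E01⟩

end Field

theorem stmt_15 {F : Type*} [Field F] (hch : ringChar F = 2)
    (a1 a2 a4 b1 : F)
    (A : Matrix (Fin 2) (Fin 2 × Fin 2) F)
    (hA : A = MSC a1 a2 (a2 + 1) a4 b1 a1 (1 + a1) a2) :
    (∀ g : Matrix (Fin 2) (Fin 2) F, IsAutoMat A g ↔ g = 1) ∧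
    (∀ D : Matrix (Fin 2) (Fin 2) F, IsDerMat A D ↔ D = 0) := by
  have : CharP F 2 := ringChar.of_eq hch
  change A = A12 a1 a2 a4 b1 at hA
  subst hA
  refine ⟨fun g => ⟨fun hg => ?_, fun hg => hg ▸ isAutoMat_one _⟩,
    fun D => ⟨fun hD => ?_, fun hD => hD ▸ isDerMat_zero _⟩⟩
  · obtain ⟨s, t, rfl⟩ :=
      exists_eq_of_mulVec_one_eq_det_smul hg.mulVec_one_A12 ((isUnit_iff_isUnit_det _).mp hg.1)
    obtain ⟨rfl, rfl⟩ := eq_zero_of_isAutoMat_A12 hg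
    simp [one_fin_two]
  · obtain ⟨x, y, rfl⟩ := exists_eq_of_mulVec_one_eq_trace_smul hD.mulVec_one_A12
    obtain ⟨rfl, rfl⟩ := eq_zero_of_isDerMat_A12 hD
    exact (eta_fin_two 0).symm
end

section
/- Let F be a field with char F = 2, let β₁ ∈ F, assume the polynomial (β₁t³ + t + 1)(β₁t² + β₁t + 1) in t has no root in F, and let A = A_{8,2}(β₁) = [[0, 1, 1, 1],[β₁, 0, 0, 1]]. Then the only 2×2 matrix D over F with DA = A(D⊗I₂ + I₂⊗D) is the zero matrix, and the invertible 2×2 matrices g with gA = A(g⊗g) are exactly: the identity matrix, together with the matrices [[1+d, 1+d+d²],[1, d]] for those d ∈ F with d²+d+1 ≠ 0 and β₁ = 1/(d²+d+1), together with the matrices [[d, d+d²],[(1+d)/d, d]] for those d ∈ F with d ≠ 0 and β₁ = (1+d)/d³. -/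
open Matrix Kronecker

/-! In characteristic two the equation `g A = A (g ⊗ g)` for `g = !![a, b; c, d]` reduces to six
polynomial equations, three of which combine to `β (s² + s) = 0` for the trace `s = a + d`.
Trace `1` forces `c = 1` and gives the first family; trace `0` forces `a = d`, `b = d + d²` and
`c d = 1 + d`, which is the identity for `d = 1` and the second family otherwise. -/

def A82 {F : Type*} [Field F] (β : F) : Matrix (Fin 2) (Fin 2 × Fin 2) F :=
  MSC 0 1 1 1 β 0 0 1

namespace A82

variable {F : Type*} [Field F]

theorem isDerMat_of_iff (β a b c d : F) :
    IsDerMat (A82 β) !![a, b; c, d] ↔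
      b * β = 2 * c ∧ c + d = 0 ∧ a = b + 2 * d ∧ d * β = 2 * a * β ∧ β * b = 0 ∧
        c = d := by
  rw [IsDerMat, ← Matrix.ext_iff]
  simp [Fin.forall_fin_two, A82, MSC, mul_apply, one_apply, Fintype.sum_prod_type,
    finProdFinEquiv]
  grind

theorem isDerMat_iff {β : F} (hβ : β ≠ 0) (D : Matrix (Fin 2) (Fin 2) F) :
    IsDerMat (A82 β) D ↔ D = 0 := by
  refine ⟨fun hD => ?_, fun hD => by simp [hD, IsDerMat]⟩
  obtain ⟨a, b, c, d, rfl⟩ : ∃ a b c d, D = !![a, b; c, d] := ⟨_, _, _, _, eta_fin_two D⟩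
  obtain ⟨-, hcd, hab, hda, hb, rfl⟩ := (isDerMat_of_iff β a b c d).1 hD
  obtain rfl : b = 0 := (mul_eq_zero.1 hb).resolve_left hβ
  obtain rfl : c = 0 := by grind
  obtain rfl : a = 0 := by simpa using hab
  exact (eta_fin_two 0).symm

theorem isAutoMat_one (A : Matrix (Fin 2) (Fin 2 × Fin 2) F) : IsAutoMat A 1 :=
  ⟨isUnit_one, by simp⟩

variable [CharP F 2]

theorem isAutoMat_of_iff (β a b c d : F) :
    IsAutoMat (A82 β) !![a, b; c, d] ↔ a * d - b * c ≠ 0 ∧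
      b * β = c ^ 2 ∧ a = a * d + b * c + c * d ∧ a + b = d ^ 2 ∧
      d * β = β * a ^ 2 + c ^ 2 ∧ c = β * a * b + c * d ∧ c + d = β * b ^ 2 + d ^ 2 := by
  rw [IsAutoMat, isUnit_iff_isUnit_det, det_fin_two_of, isUnit_iff_ne_zero, ← Matrix.ext_iff]
  simp [Fin.forall_fin_two, A82, MSC, mul_apply, Fintype.sum_prod_type, finProdFinEquiv]
  grind

variable {β a b c d : F}

theorem trace_eq_zero_or_eq_one (hβ : β ≠ 0) (hbc : b * β = c ^ 2) (hbd : a + b = d ^ 2)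
    (hda : d * β = β * a ^ 2 + c ^ 2) : a + d = 0 ∨ a + d = 1 := by
  have : β * ((a + d) * (a + d + 1)) = 0 := by grind
  rcases mul_eq_zero.1 ((mul_eq_zero.1 this).resolve_left hβ) with hs | hs
  · exact .inl hs
  · exact .inr (CharTwo.add_eq_zero.1 hs)

theorem entries_of_trace_eq_one (hβ : β ≠ 0) (hs : a + d = 1) (hbc : b * β = c ^ 2)
    (had : a = a * d + b * c + c * d) (hbd : a + b = d ^ 2) (hcd : c + d = β * b ^ 2 + d ^ 2) :
    a = 1 + d ∧ b = 1 + d + d ^ 2 ∧ c = 1 ∧ β * (d ^ 2 + d + 1) = 1 := by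
  have ha : a = 1 + d := CharTwo.add_eq_iff_eq_add.1 hs
  have hb : b = 1 + d + d ^ 2 := by grind
  have hc : c = 1 := by
    have : (1 + d) ^ 2 * (c + 1) = 0 := by grind
    rcases mul_eq_zero.1 this with hd | hc
    · -- then `a = 0` and `b = 1`, so `c = β = c²`
      have hd : d = 1 := by grind
      have hcβ : c = β := by grind
      have : c * (c - 1) = 0 := by grind
      exact sub_eq_zero.1 ((mul_eq_zero.1 this).resolve_left (hcβ ▸ hβ))
    · grind
  exact ⟨ha, hb, hc, by grind⟩

theorem entries_of_trace_eq_zero (hdet : a * d - b * c ≠ 0) (hs : a + d = 0)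
    (hbc : b * β = c ^ 2) (had : a = a * d + b * c + c * d) (hbd : a + b = d ^ 2) :
    (a = 1 ∧ b = 0 ∧ c = 0 ∧ d = 1) ∨
      (d ≠ 0 ∧ a = d ∧ b = d + d ^ 2 ∧ c = (1 + d) / d ∧ β = (1 + d) / d ^ 3) := by
  have ha : a = d := CharTwo.add_eq_zero.1 hs
  have hb : b = d + d ^ 2 := by grind
  have hd : d ≠ 0 := by
    rintro rfl
    exact hdet (by simp [ha, hb])
  have hcd : c * d = 1 + d := mul_right_cancel₀ hd (by grind)
  -- `hbc` times `d²`, using `(c d)² = (1 + d)²`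
  have : (1 + d) * (β * d ^ 3 - (1 + d)) = 0 := by grind
  rcases mul_eq_zero.1 this with hd1 | hβd
  · left
    grind
  · right
    exact ⟨hd, ha, hb, (eq_div_iff hd).2 hcd,
      (eq_div_iff (pow_ne_zero 3 hd)).2 (sub_eq_zero.1 hβd)⟩

theorem isAutoMat_of_mul_eq_one (h : β * (d ^ 2 + d + 1) = 1) :
    IsAutoMat (A82 β) !![1 + d, 1 + d + d ^ 2; 1, d] := by
  rw [isAutoMat_of_iff]
  grind

theorem isAutoMat_of_mul_pow_three_eq (hd : d ≠ 0) (h : β * d ^ 3 = 1 + d) :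
    IsAutoMat (A82 β) !![d, d + d ^ 2; (1 + d) / d, d] := by
  have hc : (1 + d) / d * d = 1 + d := div_mul_cancel₀ _ hd
  rw [isAutoMat_of_iff]
  grind

theorem isAutoMat_iff (hβ : β ≠ 0) (g : Matrix (Fin 2) (Fin 2) F) :
    IsAutoMat (A82 β) g ↔
      g = 1 ∨
      (∃ d : F, d ^ 2 + d + 1 ≠ 0 ∧ β = 1 / (d ^ 2 + d + 1) ∧
        g = !![1 + d, 1 + d + d ^ 2; 1, d]) ∨
      (∃ d : F, d ≠ 0 ∧ β = (1 + d) / d ^ 3 ∧ g = !![d, d + d ^ 2; (1 + d) / d, d]) := by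
  refine ⟨fun hg => ?_, ?_⟩
  · obtain ⟨a, b, c, d, rfl⟩ : ∃ a b c d, g = !![a, b; c, d] :=
      ⟨_, _, _, _, eta_fin_two g⟩
    obtain ⟨hdet, hbc, had, hbd, hda, -, hcd⟩ := (isAutoMat_of_iff β a b c d).1 hg
    rcases trace_eq_zero_or_eq_one hβ hbc hbd hda with hs | hs
    · rcases entries_of_trace_eq_zero hdet hs hbc had hbd with
        ⟨rfl, rfl, rfl, rfl⟩ | ⟨hd, ha, rfl, rfl, hβd⟩
      · exact .inl one_fin_two.symm
      · subst a
        exact .inr (.inr ⟨d, hd, hβd, rfl⟩)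
    · obtain ⟨rfl, rfl, rfl, hβd⟩ := entries_of_trace_eq_one hβ hs hbc had hbd hcd
      exact .inr (.inl
        ⟨d, right_ne_zero_of_mul_eq_one hβd, eq_one_div_of_mul_eq_one_left hβd, rfl⟩)
  · rintro (rfl | ⟨d, hd, rfl, rfl⟩ | ⟨d, hd, rfl, rfl⟩)
    · exact isAutoMat_one _
    · exact isAutoMat_of_mul_eq_one (one_div_mul_cancel hd)
    · exact isAutoMat_of_mul_pow_three_eq hd (div_mul_cancel₀ _ (pow_ne_zero 3 hd))

end A82

theorem stmt_17 {F : Type*} [Field F] (hch : ringChar F = 2)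
    (b1 : F)
    (hroot : ∀ t : F,
      (b1 * t ^ 3 + t + 1) * (b1 * t ^ 2 + b1 * t + 1) ≠ 0)
    (A : Matrix (Fin 2) (Fin 2 × Fin 2) F)
    (hA : A = MSC 0 1 1 1 b1 0 0 1) :
    (∀ D : Matrix (Fin 2) (Fin 2) F, IsDerMat A D ↔ D = 0) ∧
    (∀ g : Matrix (Fin 2) (Fin 2) F,
      IsAutoMat A g ↔
        g = 1 ∨
        (∃ d : F, d ^ 2 + d + 1 ≠ 0 ∧ b1 = 1 / (d ^ 2 + d + 1) ∧
          g = !![1 + d, 1 + d + d ^ 2; 1, d]) ∨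
        (∃ d : F, d ≠ 0 ∧ b1 = (1 + d) / d ^ 3 ∧
          g = !![d, d + d ^ 2; (1 + d) / d, d])) := by
  have : CharP F 2 := ringChar.eq_iff.1 hch
  have hb1 : b1 ≠ 0 := fun h => hroot 1 (by rw [h]; grind)
  subst hA
  exact ⟨A82.isDerMat_iff hb1, A82.isAutoMat_iff hb1⟩
end
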